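/- arXiv:1904.03745 — 16 statements merged into one kernel-verified Lean document; each statement's English description precedes it below -/
import Mathlib

section
/- The symmetrized bidisc equals the extended symmetrized bidisc: the set G₂ = {(z₁+z₂, z₁z₂) : z₁, z₂ ∈ 𝔻} coincides with the set G̃₂ = {(β + β̄q, q) : β ∈ ℂ, q ∈ 𝔻, |β| < 1}. -/
/-!
A point `(z₁ + z₂, z₁ z₂)` of the symmetrized bidisc is written as `(β + β̄ q, q)` with
`q = z₁ z₂` and `β = (s - s̄ q) / (1 - |q|²)`; the numerator equals `z₁ (1 - |z₂|²) + z₂ (1 - |z₁|²)`,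
which gives `|β| < 1`. Conversely, a root `z` of `z² - (β + β̄ q) z + q` satisfies
`z (z - β) = -q (1 - β̄ z)`, and for `|z| ≥ 1` the Blaschke factor inequality `|1 - β̄ z| ≤ |z - β|`
would force `|z - β| ≤ |q| |z - β| < |z - β|`.
-/

open Complex ComplexConjugate Polynomial

theorem IsAlgClosed.exists_add_eq_and_mul_eq {K : Type*} [Field K] [IsAlgClosed K] (s p : K) :
    ∃ x y : K, x + y = s ∧ x * y = p := by
  obtain ⟨x, hx⟩ := IsAlgClosed.exists_root (C 1 * X ^ 2 + C (-s) * X + C p)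
    (by rw [degree_quadratic one_ne_zero]; decide)
  refine ⟨x, s - x, by ring, ?_⟩
  simp only [IsRoot, eval_add, eval_mul, eval_C, eval_pow, eval_X] at hx
  linear_combination -hx

namespace Complex

theorem normSq_one_sub_conj_mul_sub_normSq_sub (a z : ℂ) :
    normSq (1 - conj a * z) - normSq (z - a) = (1 - normSq a) * (1 - normSq z) := by
  simp only [normSq_apply, sub_re, sub_im, mul_re, mul_im, conj_re, conj_im, one_re, one_im]
  ring

theorem norm_one_sub_conj_mul_le_norm_sub {a z : ℂ} (ha : ‖a‖ ≤ 1) (hz : 1 ≤ ‖z‖) :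
    ‖1 - conj a * z‖ ≤ ‖z - a‖ := by
  rw [← sq_le_sq₀ (norm_nonneg _) (norm_nonneg _), ← normSq_eq_norm_sq, ← normSq_eq_norm_sq]
  have ha' : normSq a ≤ 1 := by rw [normSq_eq_norm_sq]; nlinarith [norm_nonneg a]
  have hz' : 1 ≤ normSq z := by rw [normSq_eq_norm_sq]; nlinarith
  linarith [normSq_one_sub_conj_mul_sub_normSq_sub a z,
    mul_nonpos_of_nonneg_of_nonpos (sub_nonneg.2 ha') (sub_nonpos.2 hz')]

theorem norm_lt_one_of_sq_sub_add_eq_zero {β q z : ℂ} (hβ : ‖β‖ < 1) (hq : ‖q‖ < 1)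
    (hz : z ^ 2 - (β + conj β * q) * z + q = 0) : ‖z‖ < 1 := by
  by_contra! h
  have hzβ : 0 < ‖z - β‖ := by linarith [norm_sub_norm_le z β]
  have key : ‖z‖ * ‖z - β‖ = ‖q‖ * ‖1 - conj β * z‖ := by
    rw [← norm_mul, ← norm_mul, ← norm_neg (q * _)]
    congr 1
    linear_combination hz
  have := calc
    ‖z - β‖ ≤ ‖z‖ * ‖z - β‖ := le_mul_of_one_le_left hzβ.le h
    _ = ‖q‖ * ‖1 - conj β * z‖ := key
    _ ≤ ‖q‖ * ‖z - β‖ := by gcongr; exact norm_one_sub_conj_mul_le_norm_sub hβ.le h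
    _ < ‖z - β‖ := mul_lt_of_lt_one_left hzβ hq
  exact lt_irrefl _ this

end Complex

noncomputable def bidiscBeta (s p : ℂ) : ℂ := (s - conj s * p) / ((1 - ‖p‖ ^ 2 : ℝ) : ℂ)

theorem bidiscBeta_add_conj_mul {s p : ℂ} (hp : ‖p‖ ≠ 1) :
    bidiscBeta s p + conj (bidiscBeta s p) * p = s := by
  have hD : ((1 - ‖p‖ ^ 2 : ℝ) : ℂ) ≠ 0 := by
    rw [ofReal_ne_zero, sub_ne_zero, ne_comm]
    exact (pow_eq_one_iff_of_nonneg (norm_nonneg p) two_ne_zero).not.2 hp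
  rw [bidiscBeta, map_div₀, conj_ofReal, map_sub, map_mul, conj_conj]
  field_simp
  push_cast
  linear_combination (-s) * mul_conj' p

theorem sub_conj_mul_add_mul (z₁ z₂ : ℂ) :
    z₁ + z₂ - conj (z₁ + z₂) * (z₁ * z₂) =
      z₁ * ((1 - ‖z₂‖ ^ 2 : ℝ) : ℂ) + z₂ * ((1 - ‖z₁‖ ^ 2 : ℝ) : ℂ) := by
  push_cast
  rw [map_add]
  linear_combination (-z₂) * mul_conj' z₁ - z₁ * mul_conj' z₂

theorem norm_bidiscBeta_lt_one {z₁ z₂ : ℂ} (h₁ : ‖z₁‖ < 1) (h₂ : ‖z₂‖ < 1) :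
    ‖bidiscBeta (z₁ + z₂) (z₁ * z₂)‖ < 1 := by
  have ha := norm_nonneg z₁
  have hb := norm_nonneg z₂
  have hD : 0 < 1 - ‖z₁ * z₂‖ ^ 2 := by
    rw [norm_mul, sub_pos, mul_pow]
    nlinarith [pow_lt_one₀ ha h₁ two_ne_zero, pow_lt_one₀ hb h₂ two_ne_zero, sq_nonneg ‖z₂‖]
  rw [bidiscBeta, norm_div, norm_real, Real.norm_of_nonneg hD.le, div_lt_one hD,
    sub_conj_mul_add_mul]
  calc ‖z₁ * ((1 - ‖z₂‖ ^ 2 : ℝ) : ℂ) + z₂ * ((1 - ‖z₁‖ ^ 2 : ℝ) : ℂ)‖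
      ≤ ‖z₁‖ * (1 - ‖z₂‖ ^ 2) + ‖z₂‖ * (1 - ‖z₁‖ ^ 2) := by
        refine (norm_add_le _ _).trans_eq ?_
        rw [norm_mul, norm_mul, norm_real, norm_real, Real.norm_of_nonneg, Real.norm_of_nonneg]
        · nlinarith
        · nlinarith
    -- `a (1 - b²) + b (1 - a²) = (a + b)(1 - ab) < (1 + ab)(1 - ab)`, as `(1 - a)(1 - b) > 0`
    _ < 1 - ‖z₁ * z₂‖ ^ 2 := by
        rw [norm_mul]
        nlinarith [mul_pos (mul_pos (sub_pos.2 h₁) (sub_pos.2 h₂))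
          (sub_pos.2 (mul_lt_one_of_nonneg_of_lt_one_left ha h₁ h₂.le))]

/-- The symmetrized bidisc equals the extended symmetrized bidisc. -/
theorem symmetrized_bidisc_eq_extended :
    {p : ℂ × ℂ | ∃ z₁ z₂ : ℂ, ‖z₁‖ < 1 ∧ ‖z₂‖ < 1 ∧
      p = (z₁ + z₂, z₁ * z₂)} =
    {p : ℂ × ℂ | ∃ β q : ℂ, ‖q‖ < 1 ∧ ‖β‖ < 1 ∧
      p = (β + (starRingEnd ℂ) β * q, q)} := by
  ext p
  constructor
  · rintro ⟨z₁, z₂, h₁, h₂, rfl⟩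
    have hq : ‖z₁ * z₂‖ < 1 := by
      rw [norm_mul]
      exact mul_lt_one_of_nonneg_of_lt_one_left (norm_nonneg _) h₁ h₂.le
    exact ⟨bidiscBeta (z₁ + z₂) (z₁ * z₂), z₁ * z₂, hq, norm_bidiscBeta_lt_one h₁ h₂,
      by rw [bidiscBeta_add_conj_mul hq.ne]⟩
  · rintro ⟨β, q, hq, hβ, rfl⟩
    obtain ⟨z₁, z₂, hsum, hprod⟩ := IsAlgClosed.exists_add_eq_and_mul_eq (β + conj β * q) q
    refine ⟨z₁, z₂, norm_lt_one_of_sq_sub_add_eq_zero hβ hq ?_,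
      norm_lt_one_of_sq_sub_add_eq_zero hβ hq ?_, by rw [hsum, hprod]⟩
    · rw [← hsum, ← hprod]; ring
    · rw [← hsum, ← hprod]; ring
end

section
/- The point (5/2, 5/4, 1/2) belongs to G̃₃ but not to G₃; hence the symmetrized tridisc G₃ is a proper subset of the extended symmetrized tridisc G̃₃. -/
/-! For `|p| < 1` the equations `s₁ = β₁ + β̄₂ p`, `s₂ = β₂ + β̄₁ p` are solved by
`β₁ = (s₁ - s̄₂ p) / (1 - |p|²)`, `β₂ = (s₂ - s̄₁ p) / (1 - |p|²)`. On `G₃`, with `wᵢ` the product of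
the two `zⱼ` other than `zᵢ`, the numerators are `∑ zᵢ (1 - |wᵢ|²)` and `∑ wᵢ (1 - |zᵢ|²)`, and for
`a = |zᵢ|`, `x = |wᵢ|` one has `(1 - a²x²) - a(1 - x²) - x(1 - a²) = (1 - a)(1 - x)(1 - ax) > 0`;
summing over `i` gives `|β₁| + |β₂| < 3`. The point `(5/2, 5/4, 1/2)` is `(β₁ + β̄₂ q, β₂ + β̄₁ q, q)`
for `(β₁, β₂, q) = (5/2, 0, 1/2)`, but is not in `G₃`: `2` is a root of `w³ - s₁ w² + s₂ w - p`,
whose roots on `G₃` are the `zᵢ ∈ 𝔻`. -/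

open ComplexConjugate

/-- The symmetrized tridisc. -/
def G3 : Set (ℂ × ℂ × ℂ) :=
  {p | ∃ z₁ z₂ z₃ : ℂ, ‖z₁‖ < 1 ∧ ‖z₂‖ < 1 ∧ ‖z₃‖ < 1 ∧
    p = (z₁ + z₂ + z₃, z₁ * z₂ + z₂ * z₃ + z₃ * z₁, z₁ * z₂ * z₃)}

/-- The extended symmetrized tridisc. -/
def G3ext : Set (ℂ × ℂ × ℂ) :=
  {p | ∃ β₁ β₂ q : ℂ, ‖q‖ < 1 ∧ ‖β₁‖ + ‖β₂‖ < 3 ∧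
    p = (β₁ + (starRingEnd ℂ) β₂ * q, β₂ + (starRingEnd ℂ) β₁ * q, q)}

lemma mem_G3ext_of_norm_add_norm_lt {s₁ s₂ p : ℂ} (hp : ‖p‖ < 1)
    (h : ‖s₁ - conj s₂ * p‖ + ‖s₂ - conj s₁ * p‖ < 3 * (1 - ‖p‖ ^ 2)) :
    (s₁, s₂, p) ∈ G3ext := by
  set d : ℝ := 1 - ‖p‖ ^ 2 with hd_def
  have hd : 0 < d := by nlinarith [norm_nonneg p]
  have hdC : (d : ℂ) ≠ 0 := Complex.ofReal_ne_zero.mpr hd.ne'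
  have hpp : p * conj p = 1 - d := by rw [Complex.mul_conj', hd_def]; push_cast; ring
  refine ⟨(s₁ - conj s₂ * p) / d, (s₂ - conj s₁ * p) / d, p, hp, ?_, ?_⟩
  · rw [norm_div, norm_div, Complex.norm_real, Real.norm_of_nonneg hd.le, ← add_div,
      div_lt_iff₀ hd]
    exact h
  · simp only [map_div₀, map_sub, map_mul, Complex.conj_conj, Complex.conj_ofReal, Prod.mk.injEq,
      and_true]
    constructor <;> field_simp
    · linear_combination s₁ * hpp
    · linear_combination s₂ * hpp

lemma mul_one_sub_sq_add_mul_one_sub_sq_lt {a x : ℝ} (ha₀ : 0 ≤ a) (ha : a < 1) (hx : x < 1) :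
    a * (1 - x ^ 2) + x * (1 - a ^ 2) < 1 - (a * x) ^ 2 := by
  have hax : a * x < 1 := by nlinarith
  have hfactor : 1 - (a * x) ^ 2 - (a * (1 - x ^ 2) + x * (1 - a ^ 2)) =
      (1 - a) * (1 - x) * (1 - a * x) := by
    ring
  linarith [mul_pos (mul_pos (sub_pos.2 ha) (sub_pos.2 hx)) (sub_pos.2 hax)]

lemma norm_mul_one_sub_sq_add_lt {z w p : ℂ} (hz : ‖z‖ < 1) (hw : ‖w‖ < 1) (hp : z * w = p) :
    ‖z * ((1 - ‖w‖ ^ 2 : ℝ) : ℂ)‖ + ‖w * ((1 - ‖z‖ ^ 2 : ℝ) : ℂ)‖ < 1 - ‖p‖ ^ 2 := by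
  have hw' : 0 ≤ 1 - ‖w‖ ^ 2 := by nlinarith [norm_nonneg w]
  have hz' : 0 ≤ 1 - ‖z‖ ^ 2 := by nlinarith [norm_nonneg z]
  rw [norm_mul, norm_mul, Complex.norm_real, Complex.norm_real, Real.norm_of_nonneg hw',
    Real.norm_of_nonneg hz', ← hp, norm_mul]
  exact mul_one_sub_sq_add_mul_one_sub_sq_lt (norm_nonneg z) hz hw

lemma norm_mul_lt_one {R : Type*} [SeminormedRing R] {z w : R} (hz : ‖z‖ < 1) (hw : ‖w‖ < 1) :
    ‖z * w‖ < 1 :=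
  (norm_mul_le z w).trans_lt (mul_lt_one_of_nonneg_of_lt_one_left (norm_nonneg z) hz hw.le)

lemma G3_subset_G3ext : G3 ⊆ G3ext := by
  rintro _ ⟨z₁, z₂, z₃, h₁, h₂, h₃, rfl⟩
  refine mem_G3ext_of_norm_add_norm_lt (norm_mul_lt_one (norm_mul_lt_one h₁ h₂) h₃) ?_
  have hsq : ∀ z : ℂ, ((‖z‖ ^ 2 : ℝ) : ℂ) = z * conj z := fun z => by
    rw [Complex.mul_conj']; push_cast; ring
  have e₁ : z₁ + z₂ + z₃ - conj (z₁ * z₂ + z₂ * z₃ + z₃ * z₁) * (z₁ * z₂ * z₃) =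
      z₁ * ((1 - ‖z₂ * z₃‖ ^ 2 : ℝ) : ℂ) + z₂ * ((1 - ‖z₃ * z₁‖ ^ 2 : ℝ) : ℂ) +
        z₃ * ((1 - ‖z₁ * z₂‖ ^ 2 : ℝ) : ℂ) := by
    push_cast [hsq, map_add, map_mul]; ring
  have e₂ : z₁ * z₂ + z₂ * z₃ + z₃ * z₁ - conj (z₁ + z₂ + z₃) * (z₁ * z₂ * z₃) =
      z₂ * z₃ * ((1 - ‖z₁‖ ^ 2 : ℝ) : ℂ) + z₃ * z₁ * ((1 - ‖z₂‖ ^ 2 : ℝ) : ℂ) +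
        z₁ * z₂ * ((1 - ‖z₃‖ ^ 2 : ℝ) : ℂ) := by
    push_cast [hsq, map_add, map_mul]; ring
  have b₁ := norm_mul_one_sub_sq_add_lt h₁ (norm_mul_lt_one h₂ h₃)
    (by ring : z₁ * (z₂ * z₃) = z₁ * z₂ * z₃)
  have b₂ := norm_mul_one_sub_sq_add_lt h₂ (norm_mul_lt_one h₃ h₁)
    (by ring : z₂ * (z₃ * z₁) = z₁ * z₂ * z₃)
  have b₃ := norm_mul_one_sub_sq_add_lt h₃ (norm_mul_lt_one h₁ h₂)
    (by ring : z₃ * (z₁ * z₂) = z₁ * z₂ * z₃)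
  rw [e₁, e₂]
  refine (add_le_add norm_add₃_le norm_add₃_le).trans_lt ?_
  linarith

lemma cubic_ne_zero_of_mem_G3 {s₁ s₂ p : ℂ} (h : (s₁, s₂, p) ∈ G3) {w : ℂ} (hw : 1 ≤ ‖w‖) :
    w ^ 3 - s₁ * w ^ 2 + s₂ * w - p ≠ 0 := by
  obtain ⟨z₁, z₂, z₃, h₁, h₂, h₃, hs⟩ := h
  simp only [Prod.mk.injEq] at hs
  obtain ⟨rfl, rfl, rfl⟩ := hs
  have hne : ∀ z : ℂ, ‖z‖ < 1 → w - z ≠ 0 := fun z hz hwz => by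
    rw [sub_eq_zero.mp hwz] at hw
    linarith
  have hfactor : w ^ 3 - (z₁ + z₂ + z₃) * w ^ 2 + (z₁ * z₂ + z₂ * z₃ + z₃ * z₁) * w - z₁ * z₂ * z₃ =
      (w - z₁) * (w - z₂) * (w - z₃) := by
    ring
  rw [hfactor]
  exact mul_ne_zero (mul_ne_zero (hne z₁ h₁) (hne z₂ h₂)) (hne z₃ h₃)

/-- The point (5/2, 5/4, 1/2) belongs to G̃₃ but not to G₃, so G₃ ⊊ G̃₃. -/
theorem G3_proper_subset_G3ext :
    ((5/2 : ℂ), (5/4 : ℂ), (1/2 : ℂ)) ∈ G3ext ∧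
    ((5/2 : ℂ), (5/4 : ℂ), (1/2 : ℂ)) ∉ G3 ∧
    G3 ⊂ G3ext := by
  have hmem : ((5/2 : ℂ), (5/4 : ℂ), (1/2 : ℂ)) ∈ G3ext := by
    refine ⟨5/2, 0, 1/2, by norm_num [norm_div], by norm_num [norm_div], ?_⟩
    norm_num [map_div₀, map_ofNat]
  have hnot : ((5/2 : ℂ), (5/4 : ℂ), (1/2 : ℂ)) ∉ G3 := fun h =>
    cubic_ne_zero_of_mem_G3 h (w := 2) (by norm_num) (by norm_num)
  exact ⟨hmem, hnot, G3_subset_G3ext, fun hsub => hnot (hsub hmem)⟩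
end

section
/- Let n ≥ 2, 1 ≤ j ≤ n-1, C = binom(n, j), and y₁, y₂, q ∈ ℂ. Then the following are equivalent: (a) C - y₁z - y₂w + Cqzw ≠ 0 for all z, w in the closed unit disc; (b) |y₂| < C and |Cqz - y₁| < |y₂z - C| for all z in the closed unit disc. -/
/-! Fixing one variable, the expression is affine in the other, and an affine function
`w ↦ a + w * b` has no zero on the closed unit disc exactly when `‖b‖ < ‖a‖`. -/

variable {𝕜 : Type*} [NormedField 𝕜]

theorem forall_norm_le_one_add_mul_ne_zero_iff {a b : 𝕜} :
    (∀ w : 𝕜, ‖w‖ ≤ 1 → a + w * b ≠ 0) ↔ ‖b‖ < ‖a‖ := by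
  constructor
  · intro h
    by_contra! hab
    by_cases hb : b = 0
    · exact h 0 (by simp) (by simpa [hb] using hab)
    · refine h (-a / b) ?_ (by field_simp; ring)
      rw [norm_div, norm_neg]
      exact div_le_one_of_le₀ hab (norm_nonneg b)
  · intro hab w hw hzero
    have : ‖a‖ ≤ ‖b‖ :=
      calc ‖a‖ = ‖w * b‖ := by rw [eq_neg_of_add_eq_zero_left hzero, norm_neg]
        _ = ‖w‖ * ‖b‖ := norm_mul w b
        _ ≤ ‖b‖ := mul_le_of_le_one_left (norm_nonneg b) hw
    exact this.not_gt hab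

theorem forall_norm_le_one_bilinear_ne_zero_iff (c y₁ y₂ q : 𝕜) :
    (∀ z w : 𝕜, ‖z‖ ≤ 1 → ‖w‖ ≤ 1 → c - y₁ * z - y₂ * w + c * q * z * w ≠ 0) ↔
      ‖y₂‖ < ‖c‖ ∧ ∀ z : 𝕜, ‖z‖ ≤ 1 → ‖c * q * z - y₁‖ < ‖y₂ * z - c‖ := by
  have affine_in_first (z w : 𝕜) :
      c - y₁ * w - y₂ * z + c * q * w * z = (c - y₂ * z) + w * (c * q * z - y₁) := by ring
  constructor
  · intro h
    refine ⟨?_, fun z hz => ?_⟩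
    · rw [← norm_neg y₂]
      refine forall_norm_le_one_add_mul_ne_zero_iff.1 fun w hw => ?_
      convert h 0 w (by simp) hw using 1
      ring
    · rw [norm_sub_rev (y₂ * z)]
      exact forall_norm_le_one_add_mul_ne_zero_iff.1 fun w hw => by
        simpa only [affine_in_first] using h w z hw hz
  · rintro ⟨-, h⟩ w z hw hz
    rw [affine_in_first]
    exact forall_norm_le_one_add_mul_ne_zero_iff.2 (norm_sub_rev (y₂ * z) c ▸ h z hz) w hw

theorem cond2_iff_cond3_general (n j : ℕ)
    (y₁ y₂ q : ℂ) :
    (∀ z w : ℂ, ‖z‖ ≤ 1 → ‖w‖ ≤ 1 →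
      (n.choose j : ℂ) - y₁ * z - y₂ * w + (n.choose j : ℂ) * q * z * w ≠ 0) ↔
    (‖y₂‖ < (n.choose j : ℝ) ∧ ∀ z : ℂ, ‖z‖ ≤ 1 →
      ‖(n.choose j : ℂ) * q * z - y₁‖ <
        ‖y₂ * z - (n.choose j : ℂ)‖) := by
  simpa only [Complex.norm_natCast] using
    forall_norm_le_one_bilinear_ne_zero_iff (n.choose j : ℂ) y₁ y₂ q

/-- Equivalence of conditions (2) and (3) in the characterization of points of the
extended symmetrized polydisc, for a single index `j`, with `C = n.choose j`. -/
theorem cond2_iff_cond3 (n j : ℕ) (hn : 2 ≤ n) (hj : 1 ≤ j) (hj' : j ≤ n - 1)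
    (y₁ y₂ q : ℂ) :
    (∀ z w : ℂ, ‖z‖ ≤ 1 → ‖w‖ ≤ 1 →
      (n.choose j : ℂ) - y₁ * z - y₂ * w + (n.choose j : ℂ) * q * z * w ≠ 0) ↔
    (‖y₂‖ < (n.choose j : ℝ) ∧ ∀ z : ℂ, ‖z‖ ≤ 1 →
      ‖(n.choose j : ℂ) * q * z - y₁‖ <
        ‖y₂ * z - (n.choose j : ℂ)‖) :=
  cond2_iff_cond3_general n j y₁ y₂ q
end

section
/- Let C > 0 be a real number and y₁, y₂, q ∈ ℂ with |y₂| < C. Then the inequality |Cqz - y₁| < |y₂z - C| holds for all z on the unit circle if and only if |y₁|² - |y₂|² + C²|q|² + 2C|y₂ - ȳ₁q| < C². -/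
/-!
For unimodular `z`, expanding both squared norms gives
`‖y₂ z - C‖² - ‖C q z - y₁‖² = k - Re (w z)` with `k = C² - ‖y₁‖² + ‖y₂‖² - C² ‖q‖²` and
`w = 2 C (y₂ - ȳ₁ q)`. Since `Re (w z)` attains the value `‖w‖` on the unit circle and never
exceeds it, the inequality holds on the whole circle iff `‖w‖ < k`.
-/

open ComplexConjugate

namespace Complex

theorem forall_norm_eq_one_re_mul_lt_iff (w : ℂ) (k : ℝ) :
    (∀ z : ℂ, ‖z‖ = 1 → (w * z).re < k) ↔ ‖w‖ < k := by
  refine ⟨fun H => ?_, fun H z hz => ?_⟩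
  · obtain ⟨c, hc, hwc⟩ := exists_norm_eq_mul_self w
    simpa [mul_comm w, ← hwc] using H c hc
  · calc (w * z).re ≤ ‖w * z‖ := re_le_norm _
      _ = ‖w‖ := by rw [norm_mul, hz, mul_one]
      _ < k := H

theorem norm_mul_sub_sq_of_norm_eq_one {z : ℂ} (hz : ‖z‖ = 1) (a b : ℂ) :
    ‖a * z - b‖ ^ 2 = ‖a‖ ^ 2 + ‖b‖ ^ 2 - 2 * (a * conj b * z).re := by
  simp only [Complex.sq_norm, normSq_sub, normSq_mul] at hz ⊢
  rw [← Complex.sq_norm z, hz]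
  ring_nf

end Complex

theorem circle_ineq_iff_general (C : ℝ) (hC : 0 < C) (y₁ y₂ q : ℂ) :
    (∀ z : ℂ, ‖z‖ = 1 →
      ‖(C : ℂ) * q * z - y₁‖ < ‖y₂ * z - (C : ℂ)‖) ↔
    (‖y₁‖)^2 - (‖y₂‖)^2 + C^2 * (‖q‖)^2
      + 2 * C * ‖y₂ - (starRingEnd ℂ) y₁ * q‖ < C^2 := by
  set w : ℂ := (2 * C : ℝ) * (y₂ - conj y₁ * q)
  set k : ℝ := C ^ 2 - (‖y₁‖ ^ 2 - ‖y₂‖ ^ 2 + C ^ 2 * ‖q‖ ^ 2)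
  have pointwise (z : ℂ) (hz : ‖z‖ = 1) :
      ‖(C : ℂ) * q * z - y₁‖ < ‖y₂ * z - (C : ℂ)‖ ↔ (w * z).re < k := by
    have hwz : w * z = ((2 : ℝ) : ℂ) * (y₂ * conj (C : ℂ) * z - C * q * conj y₁ * z) := by
      rw [Complex.conj_ofReal]; push_cast [w]; ring
    have hCq : ‖(C : ℂ) * q‖ = C * ‖q‖ := by
      rw [norm_mul, Complex.norm_real, Real.norm_of_nonneg hC.le]
    rw [← sq_lt_sq₀ (norm_nonneg _) (norm_nonneg _),
      Complex.norm_mul_sub_sq_of_norm_eq_one hz, Complex.norm_mul_sub_sq_of_norm_eq_one hz,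
      hwz, Complex.re_ofReal_mul, Complex.sub_re, hCq, Complex.norm_real,
      Real.norm_of_nonneg hC.le]
    constructor <;> intro <;> linarith
  have hw : ‖w‖ = 2 * C * ‖y₂ - conj y₁ * q‖ := by
    rw [norm_mul, Complex.norm_real, Real.norm_of_nonneg (by positivity)]
  rw [forall₂_congr pointwise, Complex.forall_norm_eq_one_re_mul_lt_iff, hw]
  constructor <;> intro <;> linarith

/-- Key computation behind the equivalence of conditions (3) and (5). -/
theorem circle_ineq_iff (C : ℝ) (hC : 0 < C) (y₁ y₂ q : ℂ)
    (h : ‖y₂‖ < C) :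
    (∀ z : ℂ, ‖z‖ = 1 →
      ‖(C : ℂ) * q * z - y₁‖ < ‖y₂ * z - (C : ℂ)‖) ↔
    (‖y₁‖)^2 - (‖y₂‖)^2 + C^2 * (‖q‖)^2
      + 2 * C * ‖y₂ - (starRingEnd ℂ) y₁ * q‖ < C^2 :=
  circle_ineq_iff_general C hC y₁ y₂ q
end

section
/- Let C > 0 and y₁, y₂, q ∈ ℂ with y₁y₂ ≠ C²q and |y₂| < C. Then C|y₁ - ȳ₂q| + |y₁y₂ - C²q| < C² - |y₂|² holds if and only if |y₁|² - |y₂|² + C²|q|² + 2C|y₂ - ȳ₁q| < C². -/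
/-!
Put `a = |y₁ - ȳ₂q|`, `b = |y₁y₂ - C²q|`, `e = |y₂ - ȳ₁q|`, `D = C² - |y₂|²`, `K = C²|q|² - |y₁|²`
and `S = C² - |y₁|² + |y₂|² - C²|q|²`. Two Lagrange-type identities give
`(2Ce)² - S² = (2b)² - (D + K)² = (2Ca)² - (D - K)²`.
Condition (4), `Ca + b < D`, amounts to `2Ca < D - K` and `2b < D + K`, and condition (5) reads
`2Ce < S`, so both say that this common quantity is negative. What remains is to control the signs
of `S` and `D ± K`, which follows from triangle inequalities for the decompositions
`Dq = y₂(y₁ - ȳ₂q) - (y₁y₂ - C²q)`, `Dy₁ = C²(y₁ - ȳ₂q) - ȳ₂(y₁y₂ - C²q)` and `y₂ = (y₂ - ȳ₁q) + ȳ₁q`.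
-/

open ComplexConjugate

section Identities

variable (C : ℝ) (y₁ y₂ q : ℂ)

lemma norm_mul_sub_sq_eq :
    ‖y₁ * y₂ - (C : ℂ) ^ 2 * q‖ ^ 2 =
      (C * ‖y₁ - conj y₂ * q‖) ^ 2 + (C ^ 2 - ‖y₂‖ ^ 2) * (C ^ 2 * ‖q‖ ^ 2 - ‖y₁‖ ^ 2) := by
  simp only [mul_pow, ← Complex.ofReal_pow, Complex.sq_norm, Complex.normSq_apply,
    Complex.sub_re, Complex.sub_im, Complex.mul_re, Complex.mul_im, Complex.conj_re,
    Complex.conj_im, Complex.ofReal_re, Complex.ofReal_im]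
  ring

lemma mul_norm_sub_conj_mul_sq_eq :
    (C * ‖y₂ - conj y₁ * q‖) ^ 2 =
      ‖y₁ * y₂ - (C : ℂ) ^ 2 * q‖ ^ 2 + (C ^ 2 - ‖y₁‖ ^ 2) * (‖y₂‖ ^ 2 - C ^ 2 * ‖q‖ ^ 2) := by
  simp only [mul_pow, ← Complex.ofReal_pow, Complex.sq_norm, Complex.normSq_apply,
    Complex.sub_re, Complex.sub_im, Complex.mul_re, Complex.mul_im, Complex.conj_re,
    Complex.conj_im, Complex.ofReal_re, Complex.ofReal_im]
  ring

end Identities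

lemma Complex.mul_norm_le_of_ofReal_mul_eq {c : ℝ} {z u v : ℂ} (h : (c : ℂ) * z = u - v) :
    c * ‖z‖ ≤ ‖u‖ + ‖v‖ :=
  calc c * ‖z‖ ≤ |c| * ‖z‖ := by gcongr; exact le_abs_self c
    _ = ‖u - v‖ := by rw [← h, norm_mul, Complex.norm_real, Real.norm_eq_abs]
    _ ≤ ‖u‖ + ‖v‖ := norm_sub_le u v

section RealInequalities

variable {C a b e r s t x D K : ℝ}

lemma two_mul_lt_add_of_add_lt (hx : 0 ≤ x) (hD : 0 < D) (hI : b ^ 2 = x ^ 2 + D * K)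
    (h : x + b < D) : 2 * b < D + K := by
  have hx' : x ^ 2 < (D - b) ^ 2 := pow_lt_pow_left₀ (by linarith) hx two_ne_zero
  nlinarith

lemma add_lt_of_sq_lt_sq (hK : |K| < D) (hI : b ^ 2 = x ^ 2 + D * K)
    (h : (2 * b) ^ 2 < (D + K) ^ 2) : x + b < D := by
  obtain ⟨hK₁, hK₂⟩ := abs_lt.mp hK
  have hb' : 2 * b < D + K := lt_of_pow_lt_pow_left₀ 2 (by linarith) h
  have hx' : 2 * x < D - K := lt_of_pow_lt_pow_left₀ 2 (by linarith) (by nlinarith)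
  linarith

/-- Minkowski: `(r, Ct)` is bounded coordinatewise by `(a (C², Cs) + b (s, C)) / (C² - s²)`, a vector
of length at most `√(C² + s²) (Ca + b) / (C² - s²)`. -/
lemma sq_add_mul_sq_lt (hC : 0 ≤ C) (ha : 0 ≤ a) (hb : 0 ≤ b) (hr : 0 ≤ r)
    (ht : 0 ≤ t) (hr' : (C ^ 2 - s ^ 2) * r ≤ C ^ 2 * a + s * b)
    (ht' : (C ^ 2 - s ^ 2) * t ≤ s * a + b) (h : C * a + b < C ^ 2 - s ^ 2) :
    r ^ 2 + C ^ 2 * t ^ 2 < C ^ 2 + s ^ 2 := by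
  set D := C ^ 2 - s ^ 2
  have hD : 0 < D := lt_of_le_of_lt (by positivity) h
  have key : D ^ 2 * (r ^ 2 + C ^ 2 * t ^ 2) < D ^ 2 * (C ^ 2 + s ^ 2) :=
    calc D ^ 2 * (r ^ 2 + C ^ 2 * t ^ 2) = (D * r) ^ 2 + (C * (D * t)) ^ 2 := by ring
      _ ≤ (C ^ 2 * a + s * b) ^ 2 + (C * (s * a + b)) ^ 2 := by gcongr
      _ = (C ^ 2 + s ^ 2) * (C * a + b) ^ 2 - 2 * C * a * b * (C - s) ^ 2 := by ring
      _ ≤ (C ^ 2 + s ^ 2) * (C * a + b) ^ 2 := sub_le_self _ (by positivity)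
      _ < (C ^ 2 + s ^ 2) * D ^ 2 := by
        have : 0 < C ^ 2 + s ^ 2 := by linarith [sq_nonneg s]
        gcongr
      _ = D ^ 2 * (C ^ 2 + s ^ 2) := mul_comm _ _
  exact lt_of_mul_lt_mul_left key (sq_nonneg D)

lemma abs_mul_sq_sub_sq_lt (hC : 0 ≤ C) (hsC : s < C) (hr : 0 ≤ r) (hs : 0 ≤ s) (ht : 0 ≤ t)
    (he : |s - r * t| ≤ e) (h : r ^ 2 - s ^ 2 + C ^ 2 * t ^ 2 + 2 * C * e < C ^ 2) :
    |C ^ 2 * t ^ 2 - r ^ 2| < C ^ 2 - s ^ 2 := by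
  have he₁ := mul_le_mul_of_nonneg_left ((le_abs_self _).trans he) hC
  have he₂ := mul_le_mul_of_nonneg_left ((neg_le_abs _).trans he) hC
  have hrt : 0 ≤ r + C * t := by positivity
  have hminus : |r - C * t| < C - s :=
    abs_lt_of_sq_lt_sq (by nlinarith) (by linarith)
  have hplus : r + C * t < C + s := lt_of_pow_lt_pow_left₀ 2 (by positivity) (by nlinarith)
  calc |C ^ 2 * t ^ 2 - r ^ 2| = |r - C * t| * (r + C * t) := by
        rw [← abs_of_nonneg hrt, ← abs_mul, ← abs_neg]; ring_nf
    _ < (C - s) * (C + s) := mul_lt_mul'' hminus hplus (abs_nonneg _) hrt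
    _ = C ^ 2 - s ^ 2 := by ring

lemma add_lt_sub_sq_iff (hC : 0 ≤ C) (hsC : s < C) (ha : 0 ≤ a) (hb : 0 ≤ b) (hr : 0 ≤ r)
    (hs : 0 ≤ s) (ht : 0 ≤ t)
    (hI : b ^ 2 = (C * a) ^ 2 + (C ^ 2 - s ^ 2) * (C ^ 2 * t ^ 2 - r ^ 2))
    (hII : (C * e) ^ 2 = b ^ 2 + (C ^ 2 - r ^ 2) * (s ^ 2 - C ^ 2 * t ^ 2))
    (hr' : (C ^ 2 - s ^ 2) * r ≤ C ^ 2 * a + s * b) (ht' : (C ^ 2 - s ^ 2) * t ≤ s * a + b)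
    (he : |s - r * t| ≤ e) :
    C * a + b < C ^ 2 - s ^ 2 ↔ r ^ 2 - s ^ 2 + C ^ 2 * t ^ 2 + 2 * C * e < C ^ 2 := by
  have hD : 0 < C ^ 2 - s ^ 2 := by nlinarith
  have hCe : 0 ≤ 2 * (C * e) := by have := (abs_nonneg _).trans he; positivity
  have key : (2 * (C * e)) ^ 2 - (C ^ 2 - r ^ 2 + s ^ 2 - C ^ 2 * t ^ 2) ^ 2 =
      (2 * b) ^ 2 - ((C ^ 2 - s ^ 2) + (C ^ 2 * t ^ 2 - r ^ 2)) ^ 2 := by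
    linear_combination 4 * hII
  constructor
  · intro h4
    have h2b := two_mul_lt_add_of_add_lt (by positivity) hD hI h4
    have hS := sq_add_mul_sq_lt hC ha hb hr ht hr' ht' h4
    have := pow_lt_pow_left₀ h2b (by positivity) two_ne_zero
    have h5 : 2 * (C * e) < C ^ 2 - r ^ 2 + s ^ 2 - C ^ 2 * t ^ 2 :=
      lt_of_pow_lt_pow_left₀ 2 (by linarith) (by linarith)
    linarith
  · intro h5
    have hK := abs_mul_sq_sub_sq_lt hC hsC hr hs ht he h5
    refine add_lt_of_sq_lt_sq hK hI ?_
    have hS : 2 * (C * e) < C ^ 2 - r ^ 2 + s ^ 2 - C ^ 2 * t ^ 2 := by linarith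
    have := pow_lt_pow_left₀ hS hCe two_ne_zero
    linarith

end RealInequalities

theorem cond4_iff_cond5_general (C : ℝ) (y₁ y₂ q : ℂ) (h : ‖y₂‖ < C) :
    (C * ‖y₁ - (starRingEnd ℂ) y₂ * q‖
        + ‖y₁ * y₂ - (C : ℂ)^2 * q‖ < C^2 - (‖y₂‖)^2) ↔
    ((‖y₁‖)^2 - (‖y₂‖)^2 + C^2 * (‖q‖)^2
        + 2 * C * ‖y₂ - (starRingEnd ℂ) y₁ * q‖ < C^2) := by
  have hconj := Complex.mul_conj' y₂
  have hq := Complex.mul_norm_le_of_ofReal_mul_eq (c := C ^ 2 - ‖y₂‖ ^ 2) (z := q)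
    (u := y₂ * (y₁ - conj y₂ * q)) (v := y₁ * y₂ - C ^ 2 * q)
    (by push_cast; linear_combination q * hconj)
  have hy₁ := Complex.mul_norm_le_of_ofReal_mul_eq (c := C ^ 2 - ‖y₂‖ ^ 2) (z := y₁)
    (u := C ^ 2 * (y₁ - conj y₂ * q)) (v := conj y₂ * (y₁ * y₂ - C ^ 2 * q))
    (by push_cast; linear_combination y₁ * hconj)
  have he : |‖y₂‖ - ‖y₁‖ * ‖q‖| ≤ ‖y₂ - conj y₁ * q‖ := by
    simpa only [norm_mul, Complex.norm_conj] using abs_norm_sub_norm_le y₂ (conj y₁ * q)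
  simp only [norm_mul, norm_pow, Complex.norm_conj, Complex.norm_real, Real.norm_eq_abs,
    sq_abs] at hq hy₁
  exact add_lt_sub_sq_iff ((norm_nonneg y₂).trans h.le) h (norm_nonneg _) (norm_nonneg _)
    (norm_nonneg _) (norm_nonneg _) (norm_nonneg _) (norm_mul_sub_sq_eq C y₁ y₂ q)
    (mul_norm_sub_conj_mul_sq_eq C y₁ y₂ q) hy₁ hq he

/-- Equivalence of conditions (4) and (5) in the characterization of the extended
symmetrized polydisc, for a single index with `C = n.choose j`. -/
theorem cond4_iff_cond5 (C : ℝ) (hC : 0 < C) (y₁ y₂ q : ℂ)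
    (hne : y₁ * y₂ ≠ (C : ℂ)^2 * q) (h : ‖y₂‖ < C) :
    (C * ‖y₁ - (starRingEnd ℂ) y₂ * q‖
        + ‖y₁ * y₂ - (C : ℂ)^2 * q‖ < C^2 - (‖y₂‖)^2) ↔
    ((‖y₁‖)^2 - (‖y₂‖)^2 + C^2 * (‖q‖)^2
        + 2 * C * ‖y₂ - (starRingEnd ℂ) y₁ * q‖ < C^2) :=
  cond4_iff_cond5_general C y₁ y₂ q h
end

section
/- Let C > 0 and y₁, y₂, q ∈ ℂ. The two conditions 'C|y₁ - ȳ₂q| + |y₁y₂ - C²q| < C² - |y₂|²' and 'C|y₂ - ȳ₁q| + |y₁y₂ - C²q| < C² - |y₁|²' together imply |y₂ - ȳ₁q| + |y₁ - ȳ₂q| < C(1 - |q|²). -/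
/-!
Both hypotheses are controlled by the identity
`‖x y - c q‖² = (c - ‖y‖²) (c ‖q‖² - ‖x‖²) + c ‖x - ȳ q‖²`.
Squaring `‖y₁ y₂ - C² q‖ < C² - ‖y₂‖² - C ‖y₁ - ȳ₂ q‖` and dividing by `C² - ‖y₂‖² > 0` turns the
first hypothesis into `C² ‖q‖² - ‖y₁‖² + 2 C ‖y₁ - ȳ₂ q‖ < C² - ‖y₂‖²`, and symmetrically for the
second; adding the two and dividing by `2 C` gives the claim.
-/

open ComplexConjugate

theorem Complex.sq_norm_mul_sub_ofReal_mul (c : ℝ) (x y q : ℂ) :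
    ‖x * y - c * q‖ ^ 2 = (c - ‖y‖ ^ 2) * (c * ‖q‖ ^ 2 - ‖x‖ ^ 2) + c * ‖x - conj y * q‖ ^ 2 := by
  simp only [Complex.sq_norm, Complex.normSq_apply, Complex.mul_re, Complex.mul_im,
    Complex.sub_re, Complex.sub_im, Complex.conj_re, Complex.conj_im,
    Complex.ofReal_re, Complex.ofReal_im]
  ring

theorem add_two_mul_lt_of_sq_eq_mul_add_sq {a b p s : ℝ} (hp : 0 ≤ p) (hs : 0 ≤ s)
    (hsq : s ^ 2 = a * b + p ^ 2) (h : p + s < a) : b + 2 * p < a := by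
  have ha : 0 < a := by linarith
  have hsq_lt : s ^ 2 < (a - p) ^ 2 := by nlinarith
  have : a * (b + 2 * p) < a * a := by nlinarith
  exact lt_of_mul_lt_mul_left this ha.le

theorem Complex.sq_mul_sq_norm_sub_sq_norm_add_two_mul_lt_of_add_lt {C : ℝ} (hC : 0 ≤ C) {x y q : ℂ}
    (h : C * ‖x - conj y * q‖ + ‖x * y - (C : ℂ) ^ 2 * q‖ < C ^ 2 - ‖y‖ ^ 2) :
    C ^ 2 * ‖q‖ ^ 2 - ‖x‖ ^ 2 + 2 * (C * ‖x - conj y * q‖) < C ^ 2 - ‖y‖ ^ 2 := by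
  refine add_two_mul_lt_of_sq_eq_mul_add_sq (by positivity) (norm_nonneg _) ?_ h
  have := Complex.sq_norm_mul_sub_ofReal_mul (C ^ 2) x y q
  push_cast at this
  rw [this]
  ring

/-- Implication (2) ⟹ (7) in the characterization of the extended symmetrized polydisc. -/
theorem cond4_pair_implies_cond7 (C : ℝ) (hC : 0 < C) (y₁ y₂ q : ℂ)
    (h₁ : C * ‖y₁ - (starRingEnd ℂ) y₂ * q‖
        + ‖y₁ * y₂ - (C : ℂ)^2 * q‖ < C^2 - (‖y₂‖)^2)
    (h₂ : C * ‖y₂ - (starRingEnd ℂ) y₁ * q‖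
        + ‖y₁ * y₂ - (C : ℂ)^2 * q‖ < C^2 - (‖y₁‖)^2) :
    ‖y₂ - (starRingEnd ℂ) y₁ * q‖ + ‖y₁ - (starRingEnd ℂ) y₂ * q‖
      < C * (1 - (‖q‖)^2) := by
  rw [mul_comm y₁ y₂] at h₂
  have e₁ := Complex.sq_mul_sq_norm_sub_sq_norm_add_two_mul_lt_of_add_lt hC.le h₁
  have e₂ := Complex.sq_mul_sq_norm_sub_sq_norm_add_two_mul_lt_of_add_lt hC.le h₂
  have hsum : C * (‖y₂ - conj y₁ * q‖ + ‖y₁ - conj y₂ * q‖) < C * (C * (1 - ‖q‖ ^ 2)) := by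
    linarith
  exact lt_of_mul_lt_mul_left hsum hC.le
end

section
/- Let C > 0, q ∈ ℂ with |q| < 1, and β₁, β₂ ∈ ℂ with |β₁| + |β₂| < C. Set y₁ = β₁ + β̄₂q and y₂ = β₂ + β̄₁q. Then |y₁|² - |y₂|² + C²|q|² - 2C|y₂ - ȳ₁q| < C², and moreover y₂ - ȳ₁q = β₂(1 - |q|²) and |y₁|² - |y₂|² = (|β₁|² - |β₂|²)(1 - |q|²). -/
open ComplexConjugate

/-! The substitution `y₁ = β₁ + β̄₂q`, `y₂ = β₂ + β̄₁q` scales both `y₂ - ȳ₁q` and `|y₁|² - |y₂|²`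
by `1 - |q|²`, since the cross terms `2 Re(β₁β₂q̄)` of `|y₁|²` and `|y₂|²` cancel. After factoring
out `1 - |q|² > 0`, inequality (5) becomes `|β₁|² < (C + |β₂|)²`, which holds because
`|β₁| + |β₂| < C`. -/

namespace Complex

theorem add_conj_mul_sub_conj_mul (β₁ β₂ q : ℂ) :
    β₂ + conj β₁ * q - conj (β₁ + conj β₂ * q) * q = β₂ * ((1 - ‖q‖ ^ 2 : ℝ) : ℂ) := by
  have hsq : ((‖q‖ ^ 2 : ℝ) : ℂ) = conj q * q := by
    rw [Complex.sq_norm, ← mul_conj, mul_comm]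
  rw [ofReal_sub, ofReal_one, hsq, map_add, map_mul, conj_conj]
  ring

theorem sq_norm_add_conj_mul_sub (β₁ β₂ q : ℂ) :
    ‖β₁ + conj β₂ * q‖ ^ 2 - ‖β₂ + conj β₁ * q‖ ^ 2
      = (‖β₁‖ ^ 2 - ‖β₂‖ ^ 2) * (1 - ‖q‖ ^ 2) := by
  simp only [Complex.sq_norm, normSq_apply, add_re, add_im, mul_re, mul_im, conj_re, conj_im]
  ring

end Complex

theorem sq_sub_sq_mul_add_sub_lt {a b C s : ℝ} (ha : 0 ≤ a) (hb : 0 ≤ b) (hab : a + b < C)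
    (hs : s ^ 2 < 1) :
    (a ^ 2 - b ^ 2) * (1 - s ^ 2) + C ^ 2 * s ^ 2 - 2 * C * (b * (1 - s ^ 2)) < C ^ 2 := by
  have hsq : a ^ 2 < (C + b) ^ 2 := by
    apply pow_lt_pow_left₀ _ ha two_ne_zero
    linarith
  have key : (1 - s ^ 2) * (a ^ 2 - (C + b) ^ 2) < 0 :=
    mul_neg_of_pos_of_neg (sub_pos.mpr hs) (sub_neg.mpr hsq)
  linarith

theorem extended_point_ineq_general (C : ℝ) (q β₁ β₂ : ℂ)
    (hq : ‖q‖ < 1) (hβ : ‖β₁‖ + ‖β₂‖ < C)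
    (y₁ y₂ : ℂ) (hy₁ : y₁ = β₁ + (starRingEnd ℂ) β₂ * q)
    (hy₂ : y₂ = β₂ + (starRingEnd ℂ) β₁ * q) :
    ((‖y₁‖)^2 - (‖y₂‖)^2 + C^2 * (‖q‖)^2
      - 2 * C * ‖y₂ - (starRingEnd ℂ) y₁ * q‖ < C^2) ∧
    y₂ - (starRingEnd ℂ) y₁ * q = β₂ * ((1 - (‖q‖)^2 : ℝ) : ℂ) ∧
    (‖y₁‖)^2 - (‖y₂‖)^2
      = ((‖β₁‖)^2 - (‖β₂‖)^2) * (1 - (‖q‖)^2) := by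
  subst hy₁ hy₂
  have hq2 : ‖q‖ ^ 2 < 1 := pow_lt_one₀ (norm_nonneg q) hq two_ne_zero
  have hdiff := Complex.add_conj_mul_sub_conj_mul β₁ β₂ q
  have hnorm := Complex.sq_norm_add_conj_mul_sub β₁ β₂ q
  refine ⟨?_, hdiff, hnorm⟩
  rw [hnorm, hdiff, norm_mul, Complex.norm_real, Real.norm_of_nonneg (sub_nonneg.mpr hq2.le)]
  exact sq_sub_sq_mul_add_sub_lt (norm_nonneg _) (norm_nonneg _) hβ hq2

/-- Computation showing every point of the extended symmetrized polydisc satisfies the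
defining inequality (5), with `C = n.choose j`. -/
theorem extended_point_ineq (C : ℝ) (hC : 0 < C) (q β₁ β₂ : ℂ)
    (hq : ‖q‖ < 1) (hβ : ‖β₁‖ + ‖β₂‖ < C)
    (y₁ y₂ : ℂ) (hy₁ : y₁ = β₁ + (starRingEnd ℂ) β₂ * q)
    (hy₂ : y₂ = β₂ + (starRingEnd ℂ) β₁ * q) :
    ((‖y₁‖)^2 - (‖y₂‖)^2 + C^2 * (‖q‖)^2
      - 2 * C * ‖y₂ - (starRingEnd ℂ) y₁ * q‖ < C^2) ∧
    y₂ - (starRingEnd ℂ) y₁ * q = β₂ * ((1 - (‖q‖)^2 : ℝ) : ℂ) ∧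
    (‖y₁‖)^2 - (‖y₂‖)^2
      = ((‖β₁‖)^2 - (‖β₂‖)^2) * (1 - (‖q‖)^2) :=
  extended_point_ineq_general C q β₁ β₂ hq hβ y₁ y₂ hy₁ hy₂
end

section
/- Let C > 0 and y₁, y₂, q ∈ ℂ with |q| < 1. If |y₂ - ȳ₁q| + |y₁ - ȳ₂q| < C(1 - |q|²), then setting β₁ = (y₁ - ȳ₂q)/(1 - |q|²) and β₂ = (y₂ - ȳ₁q)/(1 - |q|²), one has y₁ = β₁ + β̄₂q, y₂ = β₂ + β̄₁q, and |β₁| + |β₂| < C. -/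
/-!
With `d = 1 - q q̄`, which is real and hence self-conjugate, the identity
`β₁ + β̄₂ q = y₁` reduces after clearing `d` to
`(y₁ - ȳ₂ q) + (ȳ₂ - y₁ q̄) q = y₁ d`; the bound on `|β₁| + |β₂|` is the hypothesis
divided by `d = 1 - |q|² > 0`.
-/

open ComplexConjugate

theorem eq_div_add_conj_div_mul {K : Type*} [Field K] [StarRing K] {y₁ y₂ q : K}
    (hq : 1 - q * conj q ≠ 0) :
    y₁ = (y₁ - conj y₂ * q) / (1 - q * conj q)
      + conj ((y₂ - conj y₁ * q) / (1 - q * conj q)) * q := by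
  have hconj : conj (1 - q * conj q) = 1 - q * conj q := by
    simp only [map_sub, map_one, map_mul, starRingEnd_self_apply, mul_comm]
  rw [map_div₀, hconj, div_mul_eq_mul_div, ← add_div, eq_div_iff hq]
  simp only [map_sub, map_mul, starRingEnd_self_apply]
  ring

theorem Complex.ofReal_one_sub_norm_sq (q : ℂ) :
    ((1 - ‖q‖ ^ 2 : ℝ) : ℂ) = 1 - q * conj q := by
  rw [Complex.mul_conj']
  push_cast
  rfl

theorem Complex.norm_div_ofReal_add_norm_div_ofReal_lt {a b : ℂ} {d C : ℝ} (hd : 0 < d)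
    (h : ‖a‖ + ‖b‖ < C * d) :
    ‖a / (d : ℂ)‖ + ‖b / (d : ℂ)‖ < C := by
  rw [norm_div, norm_div, Complex.norm_real, Real.norm_of_nonneg hd.le, ← add_div,
    div_lt_iff₀ hd]
  exact h

theorem cond7_implies_representation_general (C : ℝ) (y₁ y₂ q : ℂ)
    (hq : ‖q‖ < 1)
    (h : ‖y₂ - (starRingEnd ℂ) y₁ * q‖
        + ‖y₁ - (starRingEnd ℂ) y₂ * q‖ < C * (1 - (‖q‖)^2)) :
    y₁ = (y₁ - (starRingEnd ℂ) y₂ * q) / ((1 - (‖q‖)^2 : ℝ) : ℂ)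
          + (starRingEnd ℂ) ((y₂ - (starRingEnd ℂ) y₁ * q) / ((1 - (‖q‖)^2 : ℝ) : ℂ)) * q ∧
    y₂ = (y₂ - (starRingEnd ℂ) y₁ * q) / ((1 - (‖q‖)^2 : ℝ) : ℂ)
          + (starRingEnd ℂ) ((y₁ - (starRingEnd ℂ) y₂ * q) / ((1 - (‖q‖)^2 : ℝ) : ℂ)) * q ∧
    ‖(y₁ - (starRingEnd ℂ) y₂ * q) / ((1 - (‖q‖)^2 : ℝ) : ℂ)‖
      + ‖(y₂ - (starRingEnd ℂ) y₁ * q) / ((1 - (‖q‖)^2 : ℝ) : ℂ)‖ < C := by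
  have hd : 0 < 1 - ‖q‖ ^ 2 := by nlinarith [norm_nonneg q]
  have hd_eq : ((1 - ‖q‖ ^ 2 : ℝ) : ℂ) = 1 - q * conj q := Complex.ofReal_one_sub_norm_sq q
  have hd_ne : 1 - q * conj q ≠ 0 := by
    rw [← hd_eq]
    exact_mod_cast hd.ne'
  refine ⟨?_, ?_, Complex.norm_div_ofReal_add_norm_div_ofReal_lt hd (by linarith)⟩ <;> rw [hd_eq]
  · exact eq_div_add_conj_div_mul hd_ne
  · exact eq_div_add_conj_div_mul hd_ne

/-- Implication (7) ⟹ (1): the inequality produces an explicit representation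
witnessing membership in the extended symmetrized polydisc. -/
theorem cond7_implies_representation (C : ℝ) (hC : 0 < C) (y₁ y₂ q : ℂ)
    (hq : ‖q‖ < 1)
    (h : ‖y₂ - (starRingEnd ℂ) y₁ * q‖
        + ‖y₁ - (starRingEnd ℂ) y₂ * q‖ < C * (1 - (‖q‖)^2)) :
    y₁ = (y₁ - (starRingEnd ℂ) y₂ * q) / ((1 - (‖q‖)^2 : ℝ) : ℂ)
          + (starRingEnd ℂ) ((y₂ - (starRingEnd ℂ) y₁ * q) / ((1 - (‖q‖)^2 : ℝ) : ℂ)) * q ∧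
    y₂ = (y₂ - (starRingEnd ℂ) y₁ * q) / ((1 - (‖q‖)^2 : ℝ) : ℂ)
          + (starRingEnd ℂ) ((y₁ - (starRingEnd ℂ) y₂ * q) / ((1 - (‖q‖)^2 : ℝ) : ℂ)) * q ∧
    ‖(y₁ - (starRingEnd ℂ) y₂ * q) / ((1 - (‖q‖)^2 : ℝ) : ℂ)‖
      + ‖(y₂ - (starRingEnd ℂ) y₁ * q) / ((1 - (‖q‖)^2 : ℝ) : ℂ)‖ < C :=
  cond7_implies_representation_general C y₁ y₂ q hq h
end

section
/- Let C > 0 and y₁, y₂, q ∈ ℂ. Then the following are equivalent: (a) |q| < 1 and |y₁|² + |y₂|² - C²|q|² + 2|y₁y₂ - C²q| < C²; (b) there exists a 2×2 complex matrix B with operator norm ‖B‖ < 1, B₁₁ = y₁/C, B₂₂ = y₂/C, B₁₂ = B₂₁, and det B = q. -/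
/-!
For `x = (u, v)`, `‖B x‖² = ‖c₀‖²|u|² + ‖c₁‖²|v|² + 2 Re(ū v ⟪c₀, c₁⟫)` where `c₀, c₁` are the
columns of `B`, so `‖B‖² ≤ c` exactly when `c` minus the Gram matrix of the columns is positive
semidefinite: `‖c₀‖², ‖c₁‖² ≤ c` and `|⟪c₀, c₁⟫|² ≤ (c - ‖c₀‖²)(c - ‖c₁‖²)`. The Gram determinant is
`|det B|²`, and eliminating `c` turns `‖B‖ < 1` into `|det B| < 1` and
`∑ |Bᵢⱼ|² < 1 + |det B|²`. For `B` symmetric with diagonal `y₁/C, y₂/C` and determinant `q`, the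
off-diagonal entry `b` satisfies `b² = y₁y₂/C² - q`, so this is condition (a) divided by `C²`;
conversely every square root `b` of `y₁y₂/C² - q` gives such a `B`.
-/

open Complex Matrix ComplexConjugate

lemma Complex.forall_two_mul_re_le_iff (α γ : ℝ) (β : ℂ) :
    (∀ u v : ℂ, 2 * (conj u * v * β).re ≤ α * ‖u‖ ^ 2 + γ * ‖v‖ ^ 2) ↔
      0 ≤ α ∧ 0 ≤ γ ∧ ‖β‖ ^ 2 ≤ α * γ := by
  constructor
  · intro h
    have hα : 0 ≤ α := by simpa using h 1 0
    have hγ : 0 ≤ γ := by simpa using h 0 1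
    refine ⟨hα, hγ, ?_⟩
    -- with `u = t` real and `v = conj β`, the hypothesis is a real quadratic in `t`
    have hquad : ∀ t : ℝ, 0 ≤ α * (t * t) + (-2 * ‖β‖ ^ 2) * t + γ * ‖β‖ ^ 2 := by
      intro t
      have ht := h t (conj β)
      rw [conj_ofReal, mul_assoc, ← normSq_eq_conj_mul_self, ← ofReal_mul, ofReal_re,
        norm_conj, Complex.norm_real, Real.norm_eq_abs, sq_abs, normSq_eq_norm_sq] at ht
      linarith
    have hdisc := discrim_le_zero hquad
    rw [discrim] at hdisc
    rcases (sq_nonneg ‖β‖).eq_or_lt with h0 | hpos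
    · rw [← h0]; positivity
    · nlinarith
  · rintro ⟨hα, hγ, hβ⟩ u v
    have hre : (conj u * v * β).re ≤ ‖β‖ * (‖u‖ * ‖v‖) := by
      calc (conj u * v * β).re ≤ ‖conj u * v * β‖ := re_le_norm _
        _ = ‖β‖ * (‖u‖ * ‖v‖) := by rw [norm_mul, norm_mul, norm_conj]; ring
    have hamgm : 2 * (‖β‖ * (‖u‖ * ‖v‖)) ≤ α * ‖u‖ ^ 2 + γ * ‖v‖ ^ 2 := by
      refine (pow_le_pow_iff_left₀ (by positivity) (by positivity) two_ne_zero).1 ?_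
      nlinarith [sq_nonneg (α * ‖u‖ ^ 2 - γ * ‖v‖ ^ 2),
        mul_le_mul_of_nonneg_right hβ (sq_nonneg (‖u‖ * ‖v‖))]
    linarith

lemma ContinuousLinearMap.opNorm_sq_le_iff {𝕜 E F : Type*} [NontriviallyNormedField 𝕜]
    [SeminormedAddCommGroup E] [SeminormedAddCommGroup F] [NormedSpace 𝕜 E] [NormedSpace 𝕜 F]
    {f : E →L[𝕜] F} {c : ℝ} (hc : 0 ≤ c) :
    ‖f‖ ^ 2 ≤ c ↔ ∀ x, ‖f x‖ ^ 2 ≤ c * ‖x‖ ^ 2 := by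
  rw [← Real.le_sqrt (norm_nonneg _) hc, opNorm_le_iff (Real.sqrt_nonneg c)]
  refine forall_congr' fun x => ?_
  rw [← Real.le_sqrt (norm_nonneg _) (by positivity), Real.sqrt_mul hc,
    Real.sqrt_sq (norm_nonneg _)]

lemma exists_lt_one_le_mul_sub_sub_iff (p s ρ : ℝ) (hp : 0 ≤ p) (hρ : 0 ≤ ρ) :
    (∃ c < 1, p ≤ c ∧ s ≤ c ∧ ρ ≤ (c - p) * (c - s)) ↔
      p * s - ρ < 1 ∧ p + s < 1 + (p * s - ρ) := by
  constructor
  · rintro ⟨c, hc1, hpc, hsc, hρc⟩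
    constructor
    · nlinarith [mul_le_mul_of_nonneg_left hsc hp, mul_le_mul_of_nonneg_right hpc (hp.trans hpc)]
    · nlinarith [mul_lt_mul'' (sub_lt_sub_right hc1 p) (sub_lt_sub_right hc1 s)
        (sub_nonneg.2 hpc) (sub_nonneg.2 hsc)]
  · rintro ⟨h1, h2⟩
    -- the larger root of `(c - p) * (c - s) = ρ`
    set δ := √((p - s) ^ 2 + 4 * ρ)
    have hδ : δ ^ 2 = (p - s) ^ 2 + 4 * ρ := Real.sq_sqrt (by positivity)
    have hδp : |p - s| ≤ δ := Real.abs_le_sqrt (by nlinarith)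
    refine ⟨(p + s + δ) / 2, ?_, by linarith [le_abs_self (p - s)],
      by linarith [neg_abs_le (p - s)], by nlinarith⟩
    have : δ < 2 - p - s := by
      rw [← Real.sqrt_sq (show 0 ≤ 2 - p - s by nlinarith)]
      exact Real.sqrt_lt_sqrt (by positivity) (by nlinarith)
    linarith

namespace Matrix

variable (B : Matrix (Fin 2) (Fin 2) ℂ)

lemma toEuclideanCLM_fin_two_apply (x : EuclideanSpace ℂ (Fin 2)) :
    toEuclideanCLM (𝕜 := ℂ) B x = x 0 • WithLp.toLp 2 (Bᵀ 0) + x 1 • WithLp.toLp 2 (Bᵀ 1) := by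
  conv_lhs => rw [← WithLp.toLp_ofLp (p := 2) x, toEuclideanCLM_toLp]
  ext i
  simp [mulVec, dotProduct, Fin.sum_univ_two, mul_comm]

lemma norm_toEuclideanCLM_fin_two_apply_sq (x : EuclideanSpace ℂ (Fin 2)) :
    ‖toEuclideanCLM (𝕜 := ℂ) B x‖ ^ 2 =
      ‖x 0‖ ^ 2 * ‖WithLp.toLp 2 (Bᵀ 0)‖ ^ 2 + ‖x 1‖ ^ 2 * ‖WithLp.toLp 2 (Bᵀ 1)‖ ^ 2
        + 2 * (conj (x 0) * x 1 * inner ℂ (WithLp.toLp 2 (Bᵀ 0)) (WithLp.toLp 2 (Bᵀ 1))).re := by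
  rw [toEuclideanCLM_fin_two_apply, norm_add_sq (𝕜 := ℂ), inner_smul_left, inner_smul_right,
    norm_smul, norm_smul, mul_pow, mul_pow, ← mul_assoc]
  simp only [RCLike.re_to_complex]
  ring

lemma norm_col_sq_mul_sub_norm_inner_sq :
    ‖WithLp.toLp 2 (Bᵀ 0)‖ ^ 2 * ‖WithLp.toLp 2 (Bᵀ 1)‖ ^ 2
      - ‖inner ℂ (WithLp.toLp 2 (Bᵀ 0)) (WithLp.toLp 2 (Bᵀ 1))‖ ^ 2 = ‖B.det‖ ^ 2 := by
  simp only [EuclideanSpace.norm_sq_eq, EuclideanSpace.inner_eq_star_dotProduct, dotProduct,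
    Fin.sum_univ_two, det_fin_two, transpose_apply, Pi.star_apply, RCLike.star_def,
    Complex.sq_norm, normSq_apply, mul_re, mul_im, add_re, add_im, sub_re, sub_im, conj_re, conj_im]
  ring

lemma norm_col_sq_add_norm_col_sq :
    ‖WithLp.toLp 2 (Bᵀ 0)‖ ^ 2 + ‖WithLp.toLp 2 (Bᵀ 1)‖ ^ 2
      = ‖B 0 0‖ ^ 2 + ‖B 0 1‖ ^ 2 + ‖B 1 0‖ ^ 2 + ‖B 1 1‖ ^ 2 := by
  simp only [EuclideanSpace.norm_sq_eq, Fin.sum_univ_two, transpose_apply]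
  ring

lemma norm_toEuclideanCLM_sq_le_iff {c : ℝ} (hc : 0 ≤ c) :
    ‖toEuclideanCLM (𝕜 := ℂ) B‖ ^ 2 ≤ c ↔
      ‖WithLp.toLp 2 (Bᵀ 0)‖ ^ 2 ≤ c ∧ ‖WithLp.toLp 2 (Bᵀ 1)‖ ^ 2 ≤ c ∧
        ‖inner ℂ (WithLp.toLp 2 (Bᵀ 0)) (WithLp.toLp 2 (Bᵀ 1))‖ ^ 2
          ≤ (c - ‖WithLp.toLp 2 (Bᵀ 0)‖ ^ 2) * (c - ‖WithLp.toLp 2 (Bᵀ 1)‖ ^ 2) := by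
  set p := ‖WithLp.toLp 2 (Bᵀ 0)‖ ^ 2
  set s := ‖WithLp.toLp 2 (Bᵀ 1)‖ ^ 2
  set r := inner ℂ (WithLp.toLp 2 (Bᵀ 0)) (WithLp.toLp 2 (Bᵀ 1))
  have hx (x : EuclideanSpace ℂ (Fin 2)) : ‖toEuclideanCLM (𝕜 := ℂ) B x‖ ^ 2 ≤ c * ‖x‖ ^ 2 ↔
      2 * (conj (x 0) * x 1 * r).re ≤ (c - p) * ‖x 0‖ ^ 2 + (c - s) * ‖x 1‖ ^ 2 := by
    rw [norm_toEuclideanCLM_fin_two_apply_sq, EuclideanSpace.norm_sq_eq x, Fin.sum_univ_two]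
    constructor <;> intro h <;> linarith
  rw [ContinuousLinearMap.opNorm_sq_le_iff hc, ← sub_nonneg (b := p), ← sub_nonneg (b := s),
    ← Complex.forall_two_mul_re_le_iff]
  simp only [hx]
  exact ⟨fun h u v => h (WithLp.toLp 2 ![u, v]), fun h x => h _ _⟩

theorem norm_toEuclideanCLM_lt_one_iff :
    ‖toEuclideanCLM (𝕜 := ℂ) B‖ < 1 ↔
      ‖B.det‖ < 1 ∧ ‖B 0 0‖ ^ 2 + ‖B 0 1‖ ^ 2 + ‖B 1 0‖ ^ 2 + ‖B 1 1‖ ^ 2 < 1 + ‖B.det‖ ^ 2 := by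
  rw [← sq_lt_one_iff₀ (norm_nonneg B.det), ← norm_col_sq_add_norm_col_sq,
    ← norm_col_sq_mul_sub_norm_inner_sq,
    ← exists_lt_one_le_mul_sub_sub_iff _ _ _ (sq_nonneg _) (sq_nonneg _)]
  constructor
  · intro h
    exact ⟨_, (sq_lt_one_iff₀ (norm_nonneg _)).2 h,
      (norm_toEuclideanCLM_sq_le_iff B (sq_nonneg _)).1 le_rfl⟩
  · rintro ⟨c, hc1, hc⟩
    have hc0 : 0 ≤ c := (sq_nonneg _).trans hc.1
    exact (sq_lt_one_iff₀ (norm_nonneg _)).1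
      (((norm_toEuclideanCLM_sq_le_iff B hc0).2 hc).trans_lt hc1)

lemma norm_toEuclideanCLM_symm_lt_one_iff (a b d : ℂ) :
    ‖toEuclideanCLM (𝕜 := ℂ) !![a, b; b, d]‖ < 1 ↔
      ‖a * d - b ^ 2‖ < 1 ∧ ‖a‖ ^ 2 + ‖d‖ ^ 2 + 2 * ‖b ^ 2‖ < 1 + ‖a * d - b ^ 2‖ ^ 2 := by
  rw [norm_toEuclideanCLM_lt_one_iff, det_fin_two_of, ← sq, norm_pow]
  simp only [of_apply, cons_val', cons_val_zero, cons_val_one, empty_val', cons_val_fin_one]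
  ring_nf

end Matrix

lemma cond6_iff_normalized {C : ℝ} (hC : 0 < C) (y₁ y₂ q : ℂ) :
    ‖y₁‖ ^ 2 + ‖y₂‖ ^ 2 - C ^ 2 * ‖q‖ ^ 2 + 2 * ‖y₁ * y₂ - (C : ℂ) ^ 2 * q‖ < C ^ 2 ↔
      ‖y₁ / C‖ ^ 2 + ‖y₂ / C‖ ^ 2 + 2 * ‖y₁ / C * (y₂ / C) - q‖ < 1 + ‖q‖ ^ 2 := by
  have hnorm : ‖(C : ℂ)‖ = C := by rw [norm_real, Real.norm_of_nonneg hC.le]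
  have hC' : (C : ℂ) ≠ 0 := ofReal_ne_zero.2 hC.ne'
  field_simp
  rw [norm_div, norm_div, norm_div, norm_pow, hnorm]
  field_simp
  constructor <;> intro h <;> linarith

/-- Equivalence of conditions (6) and (9): existence of a symmetric contractive
2×2 matrix with prescribed diagonal and determinant. -/
theorem cond6_iff_symmetric_matrix (C : ℝ) (hC : 0 < C) (y₁ y₂ q : ℂ) :
    (‖q‖ < 1 ∧
      (‖y₁‖)^2 + (‖y₂‖)^2 - C^2 * (‖q‖)^2
        + 2 * ‖y₁ * y₂ - (C : ℂ)^2 * q‖ < C^2) ↔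
    (∃ B : Matrix (Fin 2) (Fin 2) ℂ,
      ‖Matrix.toEuclideanCLM (𝕜 := ℂ) B‖ < 1 ∧
      B 0 0 = y₁ / (C : ℂ) ∧ B 1 1 = y₂ / (C : ℂ) ∧
      B 0 1 = B 1 0 ∧ B.det = q) := by
  rw [cond6_iff_normalized hC]
  constructor
  · intro h
    obtain ⟨b, hb⟩ := IsAlgClosed.exists_pow_nat_eq (y₁ / C * (y₂ / C) - q) two_pos
    refine ⟨!![y₁ / C, b; b, y₂ / C], ?_, rfl, rfl, rfl, ?_⟩
    · rwa [Matrix.norm_toEuclideanCLM_symm_lt_one_iff, hb, sub_sub_cancel]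
    · rw [Matrix.det_fin_two_of, ← sq, hb, sub_sub_cancel]
  · rintro ⟨B, hB, h₀₀, h₁₁, hsym, rfl⟩
    have hdet : B.det = y₁ / C * (y₂ / C) - B 1 0 ^ 2 := by
      rw [Matrix.det_fin_two, h₀₀, h₁₁, hsym, sq]
    rw [B.eta_fin_two, hsym, h₀₀, h₁₁, Matrix.norm_toEuclideanCLM_symm_lt_one_iff] at hB
    rwa [hdet, sub_sub_cancel]
end

section
/- Let C > 0 and y₁, y₂, q ∈ ℂ, and suppose there exists a 2×2 complex matrix B with ‖B‖ < 1, B₁₁ = y₁/C, B₂₂ = y₂/C, and det B = q. Then |q| < 1 and |y₁|² + |y₂|² - C²|q|² + 2|y₁y₂ - C²q| < C². -/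
/-!
A strict contraction `B` makes `1 - Bᴴ B` positive definite. For a `2 × 2` matrix this gives
positive diagonal entries (each column of `B` has norm `< 1`) and a positive determinant
`det (1 - Bᴴ B) = 1 - ∑ |Bᵢⱼ|² + |det B|²`. Hadamard's bound `|det B| ≤ ‖col₀‖ ‖col₁‖` then
gives `|det B| < 1`, while `2 |B₀₁ B₁₀| ≤ |B₀₁|² + |B₁₀|²` turns the determinant inequality into
the claimed one for `C = 1`. Since `y₁ y₂ - C² q = C² B₀₁ B₁₀`, the general case is that one
scaled by `C²`.
-/

open Matrix WithLp
open scoped ComplexOrder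

namespace Matrix

variable {𝕜 n : Type*} [RCLike 𝕜] [Fintype n]

lemma star_dotProduct_self_eq_norm_sq (x : n → 𝕜) :
    star x ⬝ᵥ x = (‖toLp 2 x‖ : 𝕜) ^ 2 := by
  rw [← inner_self_eq_norm_sq_to_K, EuclideanSpace.inner_toLp_toLp, dotProduct_comm]

lemma posDef_one_sub_conjTranspose_mul_self [DecidableEq n] {B : Matrix n n 𝕜}
    (hB : ‖toEuclideanCLM (𝕜 := 𝕜) B‖ < 1) : (1 - Bᴴ * B).PosDef := by
  refine posDef_iff_dotProduct_mulVec.2 ⟨?_, fun x hx => ?_⟩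
  · simp [IsHermitian, conjTranspose_sub]
  have hBx : ‖toLp 2 (B *ᵥ x)‖ < ‖toLp 2 x‖ := by
    have hx' : toLp 2 x ≠ 0 := by simpa using hx
    calc ‖toLp 2 (B *ᵥ x)‖ = ‖toEuclideanCLM (𝕜 := 𝕜) B (toLp 2 x)‖ := by
          rw [toEuclideanCLM_toLp]
      _ ≤ ‖toEuclideanCLM (𝕜 := 𝕜) B‖ * ‖toLp 2 x‖ := ContinuousLinearMap.le_opNorm _ _
      _ < ‖toLp 2 x‖ := mul_lt_of_lt_one_left (norm_pos_iff.2 hx') hB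
  have hquad : star x ⬝ᵥ ((1 - Bᴴ * B) *ᵥ x) = star x ⬝ᵥ x - star (B *ᵥ x) ⬝ᵥ (B *ᵥ x) := by
    rw [sub_mulVec, one_mulVec, dotProduct_sub, ← mulVec_mulVec, dotProduct_mulVec, star_mulVec]
  rw [hquad, star_dotProduct_self_eq_norm_sq, star_dotProduct_self_eq_norm_sq]
  norm_cast
  rw [sub_pos]
  gcongr

lemma one_sub_conjTranspose_mul_self_apply_self [DecidableEq n] (B : Matrix n n 𝕜) (i : n) :
    (1 - Bᴴ * B) i i = ((1 - ∑ k, ‖B k i‖ ^ 2 : ℝ) : 𝕜) := by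
  simp [mul_apply, RCLike.conj_mul]

lemma sum_norm_sq_col_lt_one [DecidableEq n] {B : Matrix n n 𝕜}
    (hB : ‖toEuclideanCLM (𝕜 := 𝕜) B‖ < 1) (i : n) : ∑ k, ‖B k i‖ ^ 2 < 1 := by
  have h := (posDef_one_sub_conjTranspose_mul_self hB).diag_pos (i := i)
  rwa [one_sub_conjTranspose_mul_self_apply_self, RCLike.ofReal_pos, sub_pos] at h

lemma det_one_sub_conjTranspose_mul_self_fin_two (B : Matrix (Fin 2) (Fin 2) 𝕜) :
    (1 - Bᴴ * B).det =
      ((1 - (‖B 0 0‖ ^ 2 + ‖B 0 1‖ ^ 2 + ‖B 1 0‖ ^ 2 + ‖B 1 1‖ ^ 2) + ‖B.det‖ ^ 2 : ℝ) : 𝕜) := by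
  push_cast
  simp only [← RCLike.conj_mul, det_fin_two, sub_apply, one_apply, mul_apply, conjTranspose_apply,
    Fin.sum_univ_two, map_sub, map_mul, RCLike.star_def]
  simp only [↓reduceIte, Fin.isValue, zero_ne_one, one_ne_zero]
  ring

variable {B : Matrix (Fin 2) (Fin 2) 𝕜}

lemma sum_norm_sq_lt_one_add_norm_det_sq (hB : ‖toEuclideanCLM (𝕜 := 𝕜) B‖ < 1) :
    ‖B 0 0‖ ^ 2 + ‖B 0 1‖ ^ 2 + ‖B 1 0‖ ^ 2 + ‖B 1 1‖ ^ 2 < 1 + ‖B.det‖ ^ 2 := by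
  have h := (posDef_one_sub_conjTranspose_mul_self hB).det_pos
  rw [det_one_sub_conjTranspose_mul_self_fin_two, RCLike.ofReal_pos] at h
  linarith

lemma norm_det_lt_one_fin_two (hB : ‖toEuclideanCLM (𝕜 := 𝕜) B‖ < 1) : ‖B.det‖ < 1 := by
  have hcol₀ := sum_norm_sq_col_lt_one hB 0
  have hcol₁ := sum_norm_sq_col_lt_one hB 1
  simp only [Fin.sum_univ_two] at hcol₀ hcol₁
  have hdet : ‖B.det‖ ≤ ‖B 0 0‖ * ‖B 1 1‖ + ‖B 0 1‖ * ‖B 1 0‖ := by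
    rw [det_fin_two, ← norm_mul, ← norm_mul]
    exact norm_sub_le _ _
  -- Cauchy–Schwarz for the columns `(B₀₀, B₁₀)` and `(B₁₁, B₀₁)`
  nlinarith [sq_nonneg (‖B 0 0‖ * ‖B 0 1‖ - ‖B 1 0‖ * ‖B 1 1‖), norm_nonneg B.det,
    norm_nonneg (B 0 0), norm_nonneg (B 0 1), norm_nonneg (B 1 0), norm_nonneg (B 1 1)]

lemma norm_sq_diag_sub_norm_det_sq_add_two_mul_norm_offDiag_lt_one
    (hB : ‖toEuclideanCLM (𝕜 := 𝕜) B‖ < 1) :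
    ‖B 0 0‖ ^ 2 + ‖B 1 1‖ ^ 2 - ‖B.det‖ ^ 2 + 2 * ‖B 0 1 * B 1 0‖ < 1 := by
  have h := sum_norm_sq_lt_one_add_norm_det_sq hB
  rw [norm_mul]
  nlinarith [sq_nonneg (‖B 0 1‖ - ‖B 1 0‖)]

end Matrix

/-- Implication (8) ⟹ (6): a contractive 2×2 matrix with prescribed diagonal and
determinant forces the inequality of condition (6). -/
theorem matrix_implies_cond6 (C : ℝ) (hC : 0 < C) (y₁ y₂ q : ℂ)
    (h : ∃ B : Matrix (Fin 2) (Fin 2) ℂ,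
      ‖Matrix.toEuclideanCLM (𝕜 := ℂ) B‖ < 1 ∧
      B 0 0 = y₁ / (C : ℂ) ∧ B 1 1 = y₂ / (C : ℂ) ∧ B.det = q) :
    ‖q‖ < 1 ∧
    (‖y₁‖)^2 + (‖y₂‖)^2 - C^2 * (‖q‖)^2
      + 2 * ‖y₁ * y₂ - (C : ℂ)^2 * q‖ < C^2 := by
  obtain ⟨B, hB, h₀₀, h₁₁, rfl⟩ := h
  have hC' : (C : ℂ) ≠ 0 := by exact_mod_cast hC.ne'
  have hy₁ : y₁ = C * B 0 0 := by rw [h₀₀, mul_div_cancel₀ _ hC']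
  have hy₂ : y₂ = C * B 1 1 := by rw [h₁₁, mul_div_cancel₀ _ hC']
  have hoff : y₁ * y₂ - (C : ℂ) ^ 2 * B.det = C ^ 2 * (B 0 1 * B 1 0) := by
    rw [hy₁, hy₂, det_fin_two]
    ring
  refine ⟨norm_det_lt_one_fin_two hB, ?_⟩
  have key := norm_sq_diag_sub_norm_det_sq_add_two_mul_norm_offDiag_lt_one hB
  rw [hoff, hy₁, hy₂]
  simp only [norm_mul, norm_pow, Complex.norm_real, Real.norm_of_nonneg hC.le] at key ⊢
  calc (C * ‖B 0 0‖) ^ 2 + (C * ‖B 1 1‖) ^ 2 - C ^ 2 * ‖B.det‖ ^ 2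
        + 2 * (C ^ 2 * (‖B 0 1‖ * ‖B 1 0‖))
      = C ^ 2 * (‖B 0 0‖ ^ 2 + ‖B 1 1‖ ^ 2 - ‖B.det‖ ^ 2 + 2 * (‖B 0 1‖ * ‖B 1 0‖)) := by ring
    _ < C ^ 2 * 1 := by gcongr
    _ = C ^ 2 := mul_one _
end

section
/- The closed extended symmetrized polydisc Γ̃ₙ is not circled: the point y = (binom(n,1), binom(n,2), …, binom(n,n−1), 1) lies in Γ̃ₙ, but iy = (i·binom(n,1), …, i·binom(n,n−1), i) does not lie in Γ̃ₙ. -/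
/-- Membership in the closed extended symmetrized polydisc `Γ̃ₙ`. -/
def inClosedExt (n : ℕ) (y : Fin (n - 1) → ℂ) (q : ℂ) : Prop :=
  ‖q‖ ≤ 1 ∧ ∃ β : Fin (n - 1) → ℂ, ∀ j : Fin (n - 1),
    y j = β j + (starRingEnd ℂ) (β j.rev) * q ∧
    ‖β j‖ + ‖β j.rev‖ ≤ (n.choose (j.val + 1) : ℝ)

/-! When `|q| = 1` the representation `y_j = β_j + β̄_{n-j} q` forces `y_{n-j} = ȳ_j q`, since
`q̄ q = 1`. For `y = (i·binom(n,j))_j` and `q = i` this fails at `j = 1`: it would say `i n = n`.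
The point `(binom(n,j))_j` with `q = 1` is represented by `β_j = binom(n,j)/2`. -/

lemma Nat.choose_rev_succ {n : ℕ} (j : Fin (n - 1)) :
    n.choose (j.rev.val + 1) = n.choose (j.val + 1) := by
  have hj := j.isLt
  rw [← Nat.choose_symm (by omega)]
  congr 1
  simp only [Fin.val_rev]
  omega

namespace inClosedExt

lemma choose_mul_one_add {n : ℕ} {q : ℂ} (hq : ‖q‖ ≤ 1) :
    inClosedExt n (fun j => n.choose (j.val + 1) * (1 + q) / 2) q := by
  refine ⟨hq, fun j => (n.choose (j.val + 1) : ℂ) / 2, fun j => ⟨?_, ?_⟩⟩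
  · simp only [Nat.choose_rev_succ, map_div₀, map_natCast, map_ofNat]
    ring
  · simp only [Nat.choose_rev_succ, norm_div, Complex.norm_natCast, Complex.norm_two]
    linarith

lemma apply_rev_eq_conj_mul {n : ℕ} {y : Fin (n - 1) → ℂ} {q : ℂ} (h : inClosedExt n y q)
    (hq : ‖q‖ = 1) (j : Fin (n - 1)) :
    y j.rev = starRingEnd ℂ (y j) * q := by
  obtain ⟨-, β, hβ⟩ := h
  have hconj : starRingEnd ℂ q * q = 1 := by
    rw [mul_comm, Complex.mul_conj, Complex.normSq_eq_norm_sq, hq]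
    norm_num
  rw [(hβ j.rev).1, (hβ j).1, Fin.rev_rev, map_add, map_mul, Complex.conj_conj]
  linear_combination (-(β j.rev)) * hconj

end inClosedExt

/-- `Γ̃ₙ` is not circled: `(binom(n,1),…,binom(n,n−1),1) ∈ Γ̃ₙ` but multiplying every
coordinate by `i` gives a point outside `Γ̃ₙ`. -/
theorem closedExt_not_circled (n : ℕ) (hn : 2 ≤ n) :
    inClosedExt n (fun j => (n.choose (j.val + 1) : ℂ)) 1 ∧
    ¬ inClosedExt n (fun j => Complex.I * (n.choose (j.val + 1) : ℂ)) Complex.I := by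
  constructor
  · convert inClosedExt.choose_mul_one_add (n := n) (q := 1) (by simp) using 2
    ring
  · intro h
    have hsymm := h.apply_rev_eq_conj_mul (by simp) ⟨0, by omega⟩
    simp only [Nat.choose_rev_succ, zero_add, Nat.choose_one_right, map_mul, Complex.conj_I,
      map_natCast] at hsymm
    have hI : Complex.I * n = n := by linear_combination hsymm - n * Complex.I_sq
    have hn0 : (n : ℂ) ≠ 0 := Nat.cast_ne_zero.mpr (by omega)
    have hI_one : Complex.I = 1 := mul_right_cancel₀ hn0 (by rw [hI, one_mul])
    simp [Complex.ext_iff] at hI_one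
end

section
/- Starlikeness estimate: let C > 0, y₁, y₂, q ∈ ℂ with |y₂| ≤ C, and 0 ≤ r < 1. If |C − zy₂|² − |y₁ − Czq|² ≥ 0 for all z in the closed unit disc, then |C − rzy₂|² − |ry₁ − Crzq|² > 0 for all z in the closed unit disc. Consequently Γ̃ₙ is starlike about the origin and rΓ̃ₙ ⊆ G̃ₙ for 0 ≤ r < 1. -/
/-- Membership in the open extended symmetrized polydisc `G̃ₙ`. -/
def inOpenExt (n : ℕ) (y : Fin (n - 1) → ℂ) (q : ℂ) : Prop :=
  ‖q‖ < 1 ∧ ∃ β : Fin (n - 1) → ℂ, ∀ j : Fin (n - 1),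
    y j = β j + (starRingEnd ℂ) (β j.rev) * q ∧
    ‖β j‖ + ‖β j.rev‖ < (n.choose (j.val + 1) : ℝ)

open ComplexConjugate

lemma sq_norm_sub_mul_sub_sq_norm_mul (C r : ℝ) (w u : ℂ) :
    ‖(C : ℂ) - r * w‖ ^ 2 - ‖(r : ℂ) * u‖ ^ 2
      = r ^ 2 * (‖(C : ℂ) - w‖ ^ 2 - ‖u‖ ^ 2) + (1 - r) * (C ^ 2 * (1 + r) - 2 * C * r * w.re) := by
  simp only [Complex.sq_norm, Complex.normSq_apply, Complex.sub_re, Complex.sub_im,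
    Complex.mul_re, Complex.mul_im, Complex.ofReal_re, Complex.ofReal_im]
  ring

lemma sq_norm_sub_mul_sub_sq_norm_mul_pos {C r : ℝ} {w u : ℂ} (hC : 0 < C) (hw : ‖w‖ ≤ C)
    (hr0 : 0 ≤ r) (hr1 : r < 1) (h : 0 ≤ ‖(C : ℂ) - w‖ ^ 2 - ‖u‖ ^ 2) :
    0 < ‖(C : ℂ) - r * w‖ ^ 2 - ‖(r : ℂ) * u‖ ^ 2 := by
  have hre : w.re ≤ C := (Complex.re_le_norm w).trans hw
  have hpos : 0 < C ^ 2 * (1 + r) - 2 * C * r * w.re := by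
    nlinarith [mul_nonneg (mul_nonneg hC.le hr0) (sub_nonneg.2 hre), mul_pos hC hC]
  rw [sq_norm_sub_mul_sub_sq_norm_mul]
  exact add_pos_of_nonneg_of_pos (by positivity) (mul_pos (sub_pos.2 hr1) hpos)

section Scaling

variable {ι : Type*} {σ : ι → ι} {r s : ℝ}

lemma exists_scaling_coeffs (hr0 : 0 ≤ r) (hr1 : r < 1) (hs0 : 0 ≤ s) (hs1 : s ≤ 1) :
    ∃ a b : ℝ, 0 ≤ a ∧ 0 ≤ b ∧ a + b * s < 1 ∧ a + r * b * s ^ 2 = r ∧ b + r * a = r := by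
  have hrs : r * s < 1 := lt_of_le_of_lt (mul_le_of_le_one_right hr0 hs1) hr1
  have hD : 0 < 1 - r ^ 2 * s ^ 2 := by nlinarith [mul_nonneg hr0 hs0]
  refine ⟨(r - r ^ 2 * s ^ 2) / (1 - r ^ 2 * s ^ 2), (r - r ^ 2) / (1 - r ^ 2 * s ^ 2),
    div_nonneg (by nlinarith [mul_nonneg hr0 hs0]) hD.le, div_nonneg (by nlinarith) hD.le,
    ?_, ?_, ?_⟩
  · rw [div_mul_eq_mul_div, ← add_div, div_lt_one hD]
    nlinarith [mul_nonneg hr0 hs0]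
  all_goals field_simp; ring

lemma mul_add_conj_mul_eq_of_coeffs (hσ : Function.Involutive σ) {β : ι → ℂ} {q : ℂ}
    {a b : ℝ} (ha : a + r * b * ‖q‖ ^ 2 = r) (hb : b + r * a = r) (j : ι) :
    (r : ℂ) * (β j + conj (β (σ j)) * q)
      = (a * β j + b * conj (β (σ j)) * q)
        + conj (a * β (σ j) + b * conj (β (σ (σ j))) * q) * (r * q) := by
  have haC : (a : ℂ) + r * b * (‖q‖ : ℂ) ^ 2 = r := by exact_mod_cast congrArg Complex.ofReal ha
  have hbC : (b : ℂ) + r * a = r := by exact_mod_cast congrArg Complex.ofReal hb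
  simp only [hσ j, map_add, map_mul, Complex.conj_conj, Complex.conj_ofReal]
  linear_combination -β j * haC - conj (β (σ j)) * q * hbC - b * r * β j * Complex.conj_mul' q

lemma norm_add_conj_mul_le {a b : ℝ} (ha : 0 ≤ a) (hb : 0 ≤ b) (x y q : ℂ) :
    ‖a * x + b * conj y * q‖ ≤ a * ‖x‖ + b * ‖q‖ * ‖y‖ := by
  refine (norm_add_le _ _).trans_eq ?_
  simp only [norm_mul, Complex.norm_real, Real.norm_of_nonneg ha, Real.norm_of_nonneg hb,
    Complex.norm_conj]
  ring

lemma exists_repr_mul_of_lt_one (hσ : Function.Involutive σ) {c : ι → ℝ} (hc : ∀ j, 0 < c j)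
    (hr0 : 0 ≤ r) (hr1 : r < 1) {y β : ι → ℂ} {q : ℂ} (hq : ‖q‖ ≤ 1)
    (hy : ∀ j, y j = β j + conj (β (σ j)) * q) (hβ : ∀ j, ‖β j‖ + ‖β (σ j)‖ ≤ c j) :
    ∃ β' : ι → ℂ, ∀ j, (r : ℂ) * y j = β' j + conj (β' (σ j)) * (r * q) ∧
      ‖β' j‖ + ‖β' (σ j)‖ < c j := by
  obtain ⟨a, b, ha0, hb0, hab, ha, hb⟩ := exists_scaling_coeffs hr0 hr1 (norm_nonneg q) hq
  refine ⟨fun j => a * β j + b * conj (β (σ j)) * q, fun j => ⟨?_, ?_⟩⟩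
  · rw [hy j]
    exact mul_add_conj_mul_eq_of_coeffs hσ ha hb j
  · have h₁ := norm_add_conj_mul_le ha0 hb0 (β j) (β (σ j)) q
    have h₂ := norm_add_conj_mul_le ha0 hb0 (β (σ j)) (β (σ (σ j))) q
    calc _ ≤ (a + b * ‖q‖) * (‖β j‖ + ‖β (σ j)‖) := by simp only [hσ j] at h₂ ⊢; linarith
      _ ≤ (a + b * ‖q‖) * c j := by gcongr; exact hβ j
      _ < c j := mul_lt_of_lt_one_left (hc j) hab

end Scaling

lemma inClosedExt_of_inOpenExt {n : ℕ} {y : Fin (n - 1) → ℂ} {q : ℂ} (h : inOpenExt n y q) :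
    inClosedExt n y q :=
  let ⟨hq, β, hβ⟩ := h
  ⟨hq.le, β, fun j => ⟨(hβ j).1, (hβ j).2.le⟩⟩

lemma inOpenExt_mul_of_inClosedExt {n : ℕ} {y : Fin (n - 1) → ℂ} {q : ℂ} {r : ℝ}
    (hr0 : 0 ≤ r) (hr1 : r < 1) (h : inClosedExt n y q) :
    inOpenExt n (fun j => (r : ℂ) * y j) ((r : ℂ) * q) := by
  obtain ⟨hq, β, hβ⟩ := h
  have hc (j : Fin (n - 1)) : (0 : ℝ) < n.choose (j.val + 1) := by
    exact_mod_cast Nat.choose_pos (by omega)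
  refine ⟨?_, exists_repr_mul_of_lt_one Fin.rev_involutive hc hr0 hr1 hq (fun j => (hβ j).1)
    (fun j => (hβ j).2)⟩
  rw [norm_mul, Complex.norm_real, Real.norm_of_nonneg hr0]
  exact (mul_le_of_le_one_right hr0 hq).trans_lt hr1

lemma starConvex_inClosedExt (n : ℕ) :
    StarConvex ℝ (0 : (Fin (n - 1) → ℂ) × ℂ) {p | inClosedExt n p.1 p.2} := by
  refine starConvex_zero_iff.2 fun p hp t ht0 ht1 => ?_
  rcases ht1.eq_or_lt with rfl | ht1
  · rwa [one_smul]
  · have hs : t • p = ((fun j => (t : ℂ) * p.1 j), (t : ℂ) * p.2) := by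
      ext <;> simp [Complex.real_smul]
    rw [Set.mem_ofPred_eq, hs]
    exact inClosedExt_of_inOpenExt (inOpenExt_mul_of_inClosedExt ht0 ht1 hp)

/-- Starlikeness estimate for `Γ̃ₙ`, together with the consequences that `Γ̃ₙ` is
starlike about the origin and `r·Γ̃ₙ ⊆ G̃ₙ` for `0 ≤ r < 1`. -/
theorem starlike_estimate (C : ℝ) (hC : 0 < C) (y₁ y₂ q : ℂ)
    (hy₂ : ‖y₂‖ ≤ C) (r : ℝ) (hr0 : 0 ≤ r) (hr1 : r < 1)
    (h : ∀ z : ℂ, ‖z‖ ≤ 1 →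
      0 ≤ (‖(C : ℂ) - z * y₂‖)^2 - (‖y₁ - (C : ℂ) * z * q‖)^2) :
    (∀ z : ℂ, ‖z‖ ≤ 1 →
      0 < (‖(C : ℂ) - (r : ℂ) * z * y₂‖)^2
        - (‖(r : ℂ) * y₁ - (C : ℂ) * (r : ℂ) * z * q‖)^2) ∧
    (∀ n : ℕ, 2 ≤ n → ∀ y : (Fin (n - 1) → ℂ) × ℂ, inClosedExt n y.1 y.2 →
      inOpenExt n (fun j => (r : ℂ) * y.1 j) ((r : ℂ) * y.2)) ∧
    (∀ n : ℕ, 2 ≤ n →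
      StarConvex ℝ (0 : (Fin (n - 1) → ℂ) × ℂ)
        {p : (Fin (n - 1) → ℂ) × ℂ | inClosedExt n p.1 p.2}) := by
  refine ⟨fun z hz => ?_, fun n _ y hy => inOpenExt_mul_of_inClosedExt hr0 hr1 hy,
    fun n _ => starConvex_inClosedExt n⟩
  have hw : ‖z * y₂‖ ≤ C := by
    rw [norm_mul]
    nlinarith [norm_nonneg z, norm_nonneg y₂]
  have key := sq_norm_sub_mul_sub_sq_norm_mul_pos hC hw hr0 hr1 (h z hz)
  convert key using 4 <;> ring
end

section
/- Schwarz lemma for G̃ₙ (necessity): let λ₀ ∈ 𝔻 \ {0} and y⁰ = (y₁⁰,…,y_{n−1}⁰,q⁰) ∈ G̃ₙ. If there exists an analytic function ψ : 𝔻 → G̃ₙ with ψ(0) = (0,…,0) and ψ(λ₀) = y⁰, then for every j = 1,…,n−1, sup_{z ∈ 𝔻} |(binom(n,j)q⁰z − y_j⁰)/(y_{n−j}⁰z − binom(n,j))| ≤ |λ₀|. -/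
open Complex Metric Set ComplexConjugate

theorem Complex.norm_le_norm_of_forall_mem_frontier_norm_le {E : Type*} [NormedAddCommGroup E]
    [NormedSpace ℂ E] [Nontrivial E] {f g : E → ℂ} {U : Set E} (hU : Bornology.IsBounded U)
    (hf : DifferentiableOn ℂ f (closure U)) (hg : DifferentiableOn ℂ g (closure U))
    (hg₀ : ∀ z ∈ closure U, g z ≠ 0) (hfg : ∀ z ∈ frontier U, ‖f z‖ ≤ ‖g z‖) {z : E}
    (hz : z ∈ closure U) : ‖f z‖ ≤ ‖g z‖ := by
  have hquot : ‖(f / g) z‖ ≤ 1 := by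
    refine norm_le_of_forall_mem_frontier_norm_le hU
      (div_eq_mul_inv f g ▸ hf.mul (hg.inv hg₀)).diffContOnCl (fun w hw => ?_) hz
    have hw' : w ∈ closure U := frontier_subset_closure hw
    rw [Pi.div_apply, norm_div, div_le_one (norm_pos_iff.mpr (hg₀ w hw'))]
    exact hfg w hw
  rwa [Pi.div_apply, norm_div, div_le_one (norm_pos_iff.mpr (hg₀ z hz))] at hquot

theorem Complex.norm_mul_sub_le_norm_sub_mul_conj {q w a : ℂ} (hq : ‖q‖ ≤ 1) (haw : ‖a‖ ≤ ‖w‖) :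
    ‖q * w - a‖ ≤ ‖w - a * conj q‖ := by
  have hsq : normSq (w - a * conj q) - normSq (q * w - a)
      = (1 - normSq q) * (normSq w - normSq a) := by
    simp only [normSq_apply, mul_re, mul_im, sub_re, sub_im, conj_re, conj_im]
    ring
  simp only [normSq_eq_norm_sq] at hsq
  have hq' : ‖q‖ ^ 2 ≤ 1 := pow_le_one₀ (norm_nonneg q) hq
  have haw' : ‖a‖ ^ 2 ≤ ‖w‖ ^ 2 := pow_le_pow_left₀ (norm_nonneg a) haw 2
  rw [← sq_le_sq₀ (norm_nonneg _) (norm_nonneg _)]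
  nlinarith

theorem Complex.mul_sub_ofReal_ne_zero {C : ℝ} {w z : ℂ} (hw : ‖w‖ < C) (hz : ‖z‖ ≤ 1) :
    w * z - C ≠ 0 := by
  intro h
  have : ‖w * z‖ < C := by
    rw [norm_mul]; nlinarith [norm_nonneg w, norm_nonneg z]
  rw [sub_eq_zero.mp h, norm_real, Real.norm_eq_abs] at this
  exact (le_abs_self C).not_gt this

section

variable {C : ℝ} {a b q z : ℂ}

theorem norm_add_conj_mul_lt (hab : ‖a‖ + ‖b‖ < C) (hq : ‖q‖ ≤ 1) :
    ‖b + conj a * q‖ < C :=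
  calc ‖b + conj a * q‖ ≤ ‖b‖ + ‖a‖ * ‖q‖ := by
        simpa only [norm_mul, RCLike.norm_conj] using norm_add_le b (conj a * q)
    _ < C := by nlinarith [norm_nonneg a]

theorem norm_sub_le_norm_mul_sub_of_norm_eq_one (hab : ‖a‖ + ‖b‖ ≤ C) (hq : ‖q‖ ≤ 1)
    (hz : ‖z‖ = 1) :
    ‖C * q * z - (a + conj b * q)‖ ≤ ‖(b + conj a * q) * z - C‖ := by
  set w : ℂ := C * z - conj b
  have hzz : conj z * z = 1 := by
    rw [conj_mul', hz]; norm_num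
  have hnum : C * q * z - (a + conj b * q) = q * w - a := by ring
  have hden : ‖(b + conj a * q) * z - C‖ = ‖w - a * conj q‖ := by
    calc ‖(b + conj a * q) * z - C‖ = ‖conj ((b + conj a * q) * z - C) * z‖ := by
          rw [norm_mul, RCLike.norm_conj, hz, mul_one]
      _ = ‖-(w - a * conj q)‖ := by
          congr 1
          simp only [map_sub, map_mul, map_add, conj_conj, conj_ofReal, w]
          linear_combination (conj b + a * conj q) * hzz
      _ = ‖w - a * conj q‖ := norm_neg _
  have haw : ‖a‖ ≤ ‖w‖ := by
    have := norm_sub_norm_le (C * z) (conj b)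
    rw [norm_mul, norm_real, Real.norm_of_nonneg (by linarith [norm_nonneg a, norm_nonneg b]),
      hz, mul_one, RCLike.norm_conj] at this
    linarith
  rw [hnum, hden]
  exact norm_mul_sub_le_norm_sub_mul_conj hq haw

theorem norm_sub_le_norm_mul_sub (hab : ‖a‖ + ‖b‖ < C) (hq : ‖q‖ ≤ 1) (hz : ‖z‖ ≤ 1) :
    ‖C * q * z - (a + conj b * q)‖ ≤ ‖(b + conj a * q) * z - C‖ := by
  have hden : ∀ w ∈ closure (ball (0 : ℂ) 1), (b + conj a * q) * w - C ≠ 0 := fun w hw =>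
    mul_sub_ofReal_ne_zero (norm_add_conj_mul_lt hab hq)
      (by simpa [closure_ball (0 : ℂ) one_ne_zero] using hw)
  refine norm_le_norm_of_forall_mem_frontier_norm_le
    (f := fun w => C * q * w - (a + conj b * q)) (g := fun w => (b + conj a * q) * w - C)
    isBounded_ball (by fun_prop) (by fun_prop) hden (fun w hw => ?_)
    (by simpa [closure_ball (0 : ℂ) one_ne_zero] using hz)
  rw [frontier_ball (0 : ℂ) one_ne_zero, mem_sphere_zero_iff_norm] at hw
  exact norm_sub_le_norm_mul_sub_of_norm_eq_one hab.le hq hw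

end

/-- `Φⱼ(z, y)` for the index `j + 1`: `j : Fin (n - 1)` runs over `0, …, n - 2`, and `j.rev`
stands for `n - (j + 1)`. -/
noncomputable def phi (n : ℕ) (j : Fin (n - 1)) (z : ℂ) (y : (Fin (n - 1) → ℂ) × ℂ) : ℂ :=
  ((n.choose (j.val + 1) : ℂ) * y.2 * z - y.1 j) / (y.1 j.rev * z - (n.choose (j.val + 1) : ℂ))

namespace inOpenExt

variable {n : ℕ} {y : Fin (n - 1) → ℂ} {q : ℂ}

theorem exists_coords (hy : inOpenExt n y q) (j : Fin (n - 1)) :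
    ∃ a b : ℂ, ‖a‖ + ‖b‖ < n.choose (j.val + 1) ∧
      y j = a + conj b * q ∧ y j.rev = b + conj a * q := by
  obtain ⟨-, β, hβ⟩ := hy
  refine ⟨β j, β j.rev, (hβ j).2, (hβ j).1, ?_⟩
  simpa only [Fin.rev_rev] using (hβ j.rev).1

theorem denom_ne_zero (hy : inOpenExt n y q) (j : Fin (n - 1)) {z : ℂ} (hz : ‖z‖ ≤ 1) :
    y j.rev * z - (n.choose (j.val + 1) : ℂ) ≠ 0 := by
  obtain ⟨a, b, hab, -, hrev⟩ := hy.exists_coords j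
  rw [hrev]
  exact_mod_cast mul_sub_ofReal_ne_zero (norm_add_conj_mul_lt hab hy.1.le) hz

theorem norm_phi_le_one {y : (Fin (n - 1) → ℂ) × ℂ} (hy : inOpenExt n y.1 y.2) (j : Fin (n - 1))
    {z : ℂ} (hz : ‖z‖ ≤ 1) : ‖phi n j z y‖ ≤ 1 := by
  obtain ⟨a, b, hab, hj, hrev⟩ := hy.exists_coords j
  rw [phi, norm_div, div_le_one (norm_pos_iff.mpr (hy.denom_ne_zero j hz)), hj, hrev]
  exact_mod_cast norm_sub_le_norm_mul_sub hab hy.1.le hz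

end inOpenExt

theorem DifferentiableOn.phi_comp {n : ℕ} {ψ : ℂ → (Fin (n - 1) → ℂ) × ℂ} {s : Set ℂ}
    (hψ : DifferentiableOn ℂ ψ s) (hmap : ∀ lam ∈ s, inOpenExt n (ψ lam).1 (ψ lam).2)
    (j : Fin (n - 1)) {z : ℂ} (hz : ‖z‖ ≤ 1) :
    DifferentiableOn ℂ (fun lam => phi n j z (ψ lam)) s := by
  have hcoord : ∀ i, DifferentiableOn ℂ (fun lam => (ψ lam).1 i) s :=
    differentiableOn_pi.mp hψ.fst
  refine DifferentiableOn.div ?_ ?_ fun lam hlam => (hmap lam hlam).denom_ne_zero j hz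
  · exact ((hψ.snd.const_mul _).mul_const z).sub (hcoord j)
  · exact ((hcoord j.rev).mul_const z).sub_const _

theorem schwarz_lemma_extended_necessity_general (n : ℕ)
    (ψ : ℂ → (Fin (n - 1) → ℂ) × ℂ)
    (hψ : DifferentiableOn ℂ ψ (Metric.ball (0 : ℂ) 1))
    (hmap : ∀ lam ∈ Metric.ball (0 : ℂ) 1, inOpenExt n (ψ lam).1 (ψ lam).2)
    (hzero : ψ 0 = 0)
    (lam₀ : ℂ) (hlam₀ : lam₀ ∈ Metric.ball (0 : ℂ) 1)
    (y : (Fin (n - 1) → ℂ) × ℂ) (hval : ψ lam₀ = y) :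
    ∀ j : Fin (n - 1), ∀ z : ℂ, ‖z‖ < 1 →
      ‖((n.choose (j.val + 1) : ℂ) * y.2 * z - y.1 j) /
        (y.1 j.rev * z - (n.choose (j.val + 1) : ℂ))‖ ≤ ‖lam₀‖ := by
  intro j z hz
  subst hval
  exact Complex.norm_le_norm_of_mapsTo_ball (f := fun lam => phi n j z (ψ lam))
    (hψ.phi_comp hmap j hz.le)
    (fun lam hlam => mem_closedBall_zero_iff.mpr ((hmap lam hlam).norm_phi_le_one j hz.le))
    (by simp [phi, hzero]) (mem_ball_zero_iff.mp hlam₀)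

/-- Schwarz lemma for `G̃ₙ` (necessity): an interpolating function forces
`sup_{z∈𝔻} |Φⱼ(z, y⁰)| ≤ |lam₀|` for every `j`. -/
theorem schwarz_lemma_extended_necessity (n : ℕ) (hn : 2 ≤ n)
    (ψ : ℂ → (Fin (n - 1) → ℂ) × ℂ)
    (hψ : DifferentiableOn ℂ ψ (Metric.ball (0 : ℂ) 1))
    (hmap : ∀ lam ∈ Metric.ball (0 : ℂ) 1, inOpenExt n (ψ lam).1 (ψ lam).2)
    (hzero : ψ 0 = 0)
    (lam₀ : ℂ) (hlam₀ : lam₀ ∈ Metric.ball (0 : ℂ) 1) (hlam₀' : lam₀ ≠ 0)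
    (y : (Fin (n - 1) → ℂ) × ℂ) (hval : ψ lam₀ = y) :
    ∀ j : Fin (n - 1), ∀ z : ℂ, ‖z‖ < 1 →
      ‖((n.choose (j.val + 1) : ℂ) * y.2 * z - y.1 j) /
        (y.1 j.rev * z - (n.choose (j.val + 1) : ℂ))‖ ≤ ‖lam₀‖ :=
  schwarz_lemma_extended_necessity_general n ψ hψ hmap hzero lam₀ hlam₀ y hval
end

section
/- If (y₁, y₂, q) ∈ G̃₃ and |y₂| ≤ |y₁|, then (|3y₂ − 3ȳ₁q| + |y₁y₂ − 9q|)/(9 − |y₁|²) ≤ (|3y₁ − 3ȳ₂q| + |y₁y₂ − 9q|)/(9 − |y₂|²). -/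
/-!
Write `y₁ = β₁ + β̄₂q`, `y₂ = β₂ + β̄₁q` and `t = |q|²`. Then `3y₂ - 3ȳ₁q = 3β₂(1 - t)` and
`3y₁ - 3ȳ₂q = 3β₁(1 - t)`, while `|y₁|²` and `|y₂|²` differ only by exchanging `|β₁|` and `|β₂|`,
so `|y₂| ≤ |y₁|` means `|β₂| ≤ |β₁|`. The common term is `y₁y₂ - 9q = u + ūq² - Mq` with
`u = β₁β₂` and `M = 9 - |β₁|² - |β₂|² ≥ 2|u|`. Since `ū(u + ūq² - 2|u|q) = (|u| - ūq)²`, the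
triangle inequality bounds its modulus by `M - |u|(1 - t) - 2 Re(ūq)`, and with this bound the
cross-multiplied inequality is a sum of two nonnegative terms.
-/

open ComplexConjugate

namespace Complex

lemma norm_add_conj_mul_sub_conj_add_conj_mul_mul (β γ : ℂ) {q : ℂ} (hq : ‖q‖ ≤ 1) :
    ‖β + conj γ * q - conj (γ + conj β * q) * q‖ = ‖β‖ * (1 - ‖q‖ ^ 2) := by
  have h : β + conj γ * q - conj (γ + conj β * q) * q = β * ((1 - ‖q‖ ^ 2 : ℝ) : ℂ) := by
    push_cast
    rw [← conj_mul']
    simp only [map_add, map_mul, conj_conj]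
    ring
  rw [h, norm_mul, norm_real, Real.norm_of_nonneg (by nlinarith [norm_nonneg q])]

lemma sq_norm_add_conj_mul (β γ q : ℂ) :
    ‖β + conj γ * q‖ ^ 2 = ‖β‖ ^ 2 + ‖γ‖ ^ 2 * ‖q‖ ^ 2 + 2 * (conj (β * γ) * q).re := by
  simp only [Complex.sq_norm, normSq_apply, mul_re, mul_im, add_re, add_im, conj_re, conj_im]
  ring

lemma add_conj_mul_mul_add_conj_mul (β γ q : ℂ) :
    (β + conj γ * q) * (γ + conj β * q)
      = β * γ + conj (β * γ) * q ^ 2 + ((‖β‖ : ℂ) ^ 2 + (‖γ‖ : ℂ) ^ 2) * q := by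
  rw [← conj_mul', ← conj_mul', map_mul]
  ring

lemma norm_add_conj_mul_sq_sub_two_norm_mul (u q : ℂ) :
    ‖u + conj u * q ^ 2 - 2 * ‖u‖ * q‖ = ‖u‖ * (1 + ‖q‖ ^ 2) - 2 * (conj u * q).re := by
  have hsq : ‖u‖ ^ 2 = u.re ^ 2 + u.im ^ 2 := by rw [Complex.sq_norm, normSq_apply]; ring
  have hre : 2 * (conj u * q).re ≤ ‖u‖ * (1 + ‖q‖ ^ 2) := by
    have := re_le_norm (conj u * q)
    rw [norm_mul, norm_conj] at this
    nlinarith [norm_nonneg u, sq_nonneg (1 - ‖q‖)]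
  rw [← abs_of_nonneg (sub_nonneg.mpr hre), ← sq_eq_sq₀ (norm_nonneg _) (abs_nonneg _), sq_abs,
    Complex.sq_norm, Complex.sq_norm]
  simp only [normSq_apply, add_re, add_im, sub_re, sub_im, mul_re, mul_im, ofReal_re, ofReal_im,
    conj_re, conj_im, re_ofNat, im_ofNat, pow_two]
  linear_combination (-(1 - (q.re * q.re + q.im * q.im)) ^ 2) * hsq

lemma norm_add_conj_mul_sq_sub_mul_le (u q : ℂ) {M : ℝ} (hM : 2 * ‖u‖ ≤ M) (hq : ‖q‖ ≤ 1) :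
    ‖u + conj u * q ^ 2 - M * q‖ ≤ M - ‖u‖ * (1 - ‖q‖ ^ 2) - 2 * (conj u * q).re := by
  have hsplit : u + conj u * q ^ 2 - M * q
      = (u + conj u * q ^ 2 - 2 * ‖u‖ * q) - ((M - 2 * ‖u‖ : ℝ) : ℂ) * q := by
    push_cast; ring
  calc ‖u + conj u * q ^ 2 - M * q‖
      ≤ ‖u + conj u * q ^ 2 - 2 * ‖u‖ * q‖ + (M - 2 * ‖u‖) * ‖q‖ := by
        rw [hsplit]
        refine (norm_sub_le _ _).trans_eq ?_
        rw [norm_mul, norm_real, Real.norm_of_nonneg (by linarith)]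
    _ ≤ ‖u‖ * (1 + ‖q‖ ^ 2) - 2 * (conj u * q).re + (M - 2 * ‖u‖) * 1 := by
        rw [norm_add_conj_mul_sq_sub_two_norm_mul]
        gcongr
    _ = M - ‖u‖ * (1 - ‖q‖ ^ 2) - 2 * (conj u * q).re := by ring

lemma norm_add_conj_mul_le (β γ : ℂ) {q : ℂ} (hq : ‖q‖ ≤ 1) : ‖β + conj γ * q‖ ≤ ‖β‖ + ‖γ‖ :=
  calc ‖β + conj γ * q‖ ≤ ‖β‖ + ‖γ‖ * ‖q‖ := by
        simpa only [norm_mul, norm_conj] using norm_add_le β (conj γ * q)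
    _ ≤ ‖β‖ + ‖γ‖ := by gcongr; exact mul_le_of_le_one_right (norm_nonneg γ) hq

lemma norm_mul_sub_nine_mul_le (β γ : ℂ) {q : ℂ} (hq : ‖q‖ ≤ 1) (hβγ : ‖β‖ + ‖γ‖ ≤ 3) :
    ‖(β + conj γ * q) * (γ + conj β * q) - 9 * q‖
      ≤ 9 - ‖β‖ ^ 2 - ‖γ‖ ^ 2 - ‖β‖ * ‖γ‖ * (1 - ‖q‖ ^ 2) - 2 * (conj (β * γ) * q).re := by
  have h : (β + conj γ * q) * (γ + conj β * q) - 9 * q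
      = β * γ + conj (β * γ) * q ^ 2 - ((9 - ‖β‖ ^ 2 - ‖γ‖ ^ 2 : ℝ) : ℂ) * q := by
    rw [add_conj_mul_mul_add_conj_mul]
    push_cast
    ring
  have hM : 2 * ‖β * γ‖ ≤ 9 - ‖β‖ ^ 2 - ‖γ‖ ^ 2 := by
    rw [norm_mul]
    nlinarith [norm_nonneg β, norm_nonneg γ]
  rw [h, ← norm_mul β γ]
  exact norm_add_conj_mul_sq_sub_mul_le (β * γ) q hM hq

end Complex

lemma three_mul_add_div_le_three_mul_add_div {p s t X C : ℝ} (hp : 0 ≤ p) (ht : t < 1)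
    (hps : p + s ≤ 3) (hC₀ : 0 ≤ C) (hC : C ≤ 9 - p ^ 2 - s ^ 2 - p * s * (1 - t) - X)
    (hD : 0 < 9 - (p ^ 2 + s ^ 2 * t + X))
    (hle : s ^ 2 + p ^ 2 * t + X ≤ p ^ 2 + s ^ 2 * t + X) :
    (3 * (s * (1 - t)) + C) / (9 - (p ^ 2 + s ^ 2 * t + X))
      ≤ (3 * (p * (1 - t)) + C) / (9 - (s ^ 2 + p ^ 2 * t + X)) := by
  have hsp : s ≤ p := by
    by_contra! hlt
    nlinarith [mul_pos (mul_pos (sub_pos.2 hlt) (by linarith : 0 < s + p)) (sub_pos.2 ht)]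
  rw [div_le_div_iff₀ hD (by nlinarith)]
  -- cross products differ by `(p - s)(1 - t)((3 - p - s)C + 3(9 - p² - s² - ps(1 - t) - X - C))`
  have hps₁ : 0 ≤ (p - s) * (1 - t) := mul_nonneg (by linarith) (by linarith)
  nlinarith [mul_nonneg hps₁ (mul_nonneg (by linarith : 0 ≤ 3 - p - s) hC₀),
    mul_nonneg hps₁ (by linarith : 0 ≤ 9 - p ^ 2 - s ^ 2 - p * s * (1 - t) - X - C)]

open Complex in
/-- If `(y₁,y₂,q) ∈ G̃₃` and `|y₂| ≤ |y₁|`, then `‖Φ₂‖ ≤ ‖Φ₁‖`. -/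
theorem phi_norm_comparison (y₁ y₂ q : ℂ) (h : (y₁, y₂, q) ∈ G3ext)
    (hle : ‖y₂‖ ≤ ‖y₁‖) :
    (‖3 * y₂ - 3 * (starRingEnd ℂ) y₁ * q‖ + ‖y₁ * y₂ - 9 * q‖)
        / (9 - (‖y₁‖)^2)
      ≤ (‖3 * y₁ - 3 * (starRingEnd ℂ) y₂ * q‖ + ‖y₁ * y₂ - 9 * q‖)
        / (9 - (‖y₂‖)^2) := by
  obtain ⟨β₁, β₂, q, hq, hβ, hy⟩ := h
  simp only [Prod.mk.injEq] at hy
  obtain ⟨rfl, rfl, rfl⟩ := hy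
  have hq₁ : ‖q‖ ≤ 1 := hq.le
  have hD : 0 < 9 - ‖β₁ + conj β₂ * q‖ ^ 2 := by
    have := (norm_add_conj_mul_le β₁ β₂ hq₁).trans_lt hβ
    nlinarith [norm_nonneg (β₁ + conj β₂ * q)]
  have hnum (a b : ℂ) : ‖3 * a - 3 * b * q‖ = 3 * ‖a - b * q‖ := by
    rw [show 3 * a - 3 * b * q = 3 * (a - b * q) by ring, norm_mul, norm_ofNat]
  rw [hnum, hnum, norm_add_conj_mul_sub_conj_add_conj_mul_mul _ _ hq₁,
    norm_add_conj_mul_sub_conj_add_conj_mul_mul _ _ hq₁]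
  have hsq := pow_le_pow_left₀ (norm_nonneg _) hle 2
  have hy₂ := sq_norm_add_conj_mul β₂ β₁ q
  rw [mul_comm β₂] at hy₂
  simp only [sq_norm_add_conj_mul β₁ β₂, hy₂] at hsq hD ⊢
  exact three_mul_add_div_le_three_mul_add_div (norm_nonneg _)
    (pow_lt_one₀ (norm_nonneg q) hq two_ne_zero) (by linarith [norm_nonneg β₁, norm_nonneg β₂])
    (norm_nonneg _)
    (norm_mul_sub_nine_mul_le β₁ β₂ hq₁ hβ.le) hD hsq
end

section
/- Let λ₀ ∈ 𝔻 \ {0}, let C > 0, and let y₁, y₂, q ∈ ℂ with y₁y₂ ≠ C²q, |y₂| ≤ |y₁|, and (C|y₁ − ȳ₂q| + |y₁y₂ − C²q|)/(C² − |y₂|²) ≤ |λ₀| (where |y₂| < C). Let w ∈ ℂ satisfy w² = (y₁y₂ − C²q)/(C²λ₀) and set Z = [[y₁/(Cλ₀), w], [w, y₂/C]]. Then ‖Z‖ ≤ 1; moreover ‖Z‖ = 1 if and only if (C|y₁ − ȳ₂q| + |y₁y₂ − C²q|)/(C² − |y₂|²) = |λ₀|. -/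
/-!
For a complex symmetric matrix `M = [[a, w], [w, b]]`, `‖x‖² - ‖M x‖²` is the Hermitian form of
`1 - Mᴴ M`, whose diagonal entries are `1 - |a|² - |w|²`, `1 - |b|² - |w|²` and whose determinant
is `1 - |a|² - |b|² - 2|w|² + |ab - w²|²`. So `‖M‖ ≤ 1` as soon as these are nonnegative, and then
`‖M‖ = 1` iff the determinant vanishes: otherwise the form is positive definite, and `‖M x‖` attains
its maximum on the unit sphere.

For `Z`, put `r = |λ₀|`, `A = C|y₁ - ȳ₂q|`, `B = |y₁y₂ - C²q|` and `D = C² - |y₂|²`. The identity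
`B² - A² = D (C²|q|² - |y₁|²)` turns `D C² r²` times the determinant into
`(Dr - B - A)(Dr - B + A)`, which is nonnegative and vanishes exactly when `A + B = Dr`. The
`(2,2)` entry is a multiple of `Dr - B ≥ A ≥ 0`, and the `(1,1)` entry is controlled through
`D|y₁| ≤ CA + |y₂|B`, the triangle inequality for `D y₁ = C² (y₁ - ȳ₂q) - ȳ₂ (y₁y₂ - C²q)`.
-/

open Complex ComplexConjugate Matrix

theorem ContinuousLinearMap.opNorm_lt_one_of_norm_apply_lt {𝕜 E F : Type*} [RCLike 𝕜]
    [NormedAddCommGroup E] [NormedSpace 𝕜 E] [ProperSpace E] [Nontrivial E]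
    [NormedAddCommGroup F] [NormedSpace 𝕜 F] (f : E →L[𝕜] F)
    (hf : ∀ x, x ≠ 0 → ‖f x‖ < ‖x‖) : ‖f‖ < 1 := by
  obtain ⟨x₀, hx₀, hmax⟩ := (isCompact_sphere (0 : E) 1).exists_isMaxOn
    (Set.nonempty_coe_sort.mp (NormedSpace.sphere_nonempty_rclike 𝕜 zero_le_one))
    (continuous_norm.comp f.continuous).continuousOn
  rw [mem_sphere_zero_iff_norm] at hx₀
  calc ‖f‖ ≤ ‖f x₀‖ := f.opNorm_le_of_unit_norm (norm_nonneg _) fun x hx ↦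
          hmax (mem_sphere_zero_iff_norm.mpr hx)
    _ < 1 := hx₀ ▸ hf x₀ (norm_ne_zero_iff.mp (by simp [hx₀]))

theorem two_mul_mul_mul_le_of_sq_le {m₁ m₂ γ : ℝ} (h₁ : 0 ≤ m₁) (h₂ : 0 ≤ m₂)
    (hγ : γ ^ 2 ≤ m₁ * m₂) (u v : ℝ) : 2 * γ * u * v ≤ m₁ * u ^ 2 + m₂ * v ^ 2 := by
  rcases h₁.eq_or_lt with rfl | h₁
  · obtain rfl : γ = 0 := by nlinarith
    nlinarith
  · nlinarith [sq_nonneg (m₁ * u - γ * v), sq_nonneg v]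

theorem two_mul_mul_mul_lt_of_sq_lt {m₁ m₂ γ : ℝ} (h₁ : 0 ≤ m₁)
    (hγ : γ ^ 2 < m₁ * m₂) {u v : ℝ} (huv : 0 < u ^ 2 + v ^ 2) :
    2 * γ * u * v < m₁ * u ^ 2 + m₂ * v ^ 2 := by
  have h₁ : 0 < m₁ := h₁.lt_of_ne (by rintro rfl; nlinarith [sq_nonneg γ])
  rcases (sq_nonneg v).eq_or_lt with hv | hv
  · obtain rfl : v = 0 := pow_eq_zero_iff two_ne_zero |>.mp hv.symm
    nlinarith
  · nlinarith [sq_nonneg (m₁ * u - γ * v)]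

namespace Matrix

variable (a b w : ℂ)

theorem norm_offDiag_sq_add_norm_det_sq :
    ‖a * conj w + w * conj b‖ ^ 2 + ‖a * b - w ^ 2‖ ^ 2 =
      (‖a‖ ^ 2 + ‖w‖ ^ 2) * (‖b‖ ^ 2 + ‖w‖ ^ 2) := by
  simp only [← normSq_eq_norm_sq]
  simp only [normSq_apply, mul_re, mul_im, add_re, add_im, sub_re, sub_im, conj_re, conj_im, sq]
  ring

theorem norm_sq_sub_norm_toEuclideanCLM_symmetric_apply_sq (x : EuclideanSpace ℂ (Fin 2)) :
    ‖x‖ ^ 2 - ‖toEuclideanCLM (𝕜 := ℂ) !![a, w; w, b] x‖ ^ 2 =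
      (1 - ‖a‖ ^ 2 - ‖w‖ ^ 2) * ‖x 0‖ ^ 2 + (1 - ‖b‖ ^ 2 - ‖w‖ ^ 2) * ‖x 1‖ ^ 2
        - 2 * ((a * conj w + w * conj b) * x 0 * conj (x 1)).re := by
  have h := congrFun (ofLp_toEuclideanCLM (𝕜 := ℂ) !![a, w; w, b] x)
  simp only [EuclideanSpace.norm_sq_eq, Fin.sum_univ_two, ← normSq_eq_norm_sq, h, mulVec,
    dotProduct, of_apply, cons_val', cons_val_zero, cons_val_one, empty_val', cons_val_fin_one,
    normSq_add, map_mul, mul_re, conj_re, conj_im, mul_im, add_re, add_im]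
  ring

variable {a b w}

theorem norm_toEuclideanCLM_symmetric_apply_le (h₁ : 0 ≤ 1 - ‖a‖ ^ 2 - ‖w‖ ^ 2)
    (h₂ : 0 ≤ 1 - ‖b‖ ^ 2 - ‖w‖ ^ 2)
    (hdet : 0 ≤ 1 - ‖a‖ ^ 2 - ‖b‖ ^ 2 - 2 * ‖w‖ ^ 2 + ‖a * b - w ^ 2‖ ^ 2)
    (x : EuclideanSpace ℂ (Fin 2)) : ‖toEuclideanCLM (𝕜 := ℂ) !![a, w; w, b] x‖ ≤ ‖x‖ := by
  set c := a * conj w + w * conj b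
  have hc : ‖c‖ ^ 2 ≤ (1 - ‖a‖ ^ 2 - ‖w‖ ^ 2) * (1 - ‖b‖ ^ 2 - ‖w‖ ^ 2) := by
    linarith [norm_offDiag_sq_add_norm_det_sq a b w]
  have hre : (c * x 0 * conj (x 1)).re ≤ ‖c‖ * ‖x 0‖ * ‖x 1‖ :=
    (re_le_norm _).trans_eq (by simp)
  have := two_mul_mul_mul_le_of_sq_le h₁ h₂ hc ‖x 0‖ ‖x 1‖
  rw [← pow_le_pow_iff_left₀ (norm_nonneg _) (norm_nonneg _) two_ne_zero]
  linarith [norm_sq_sub_norm_toEuclideanCLM_symmetric_apply_sq a b w x]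

theorem norm_toEuclideanCLM_symmetric_apply_lt (h₁ : 0 ≤ 1 - ‖a‖ ^ 2 - ‖w‖ ^ 2)
    (hdet : 0 < 1 - ‖a‖ ^ 2 - ‖b‖ ^ 2 - 2 * ‖w‖ ^ 2 + ‖a * b - w ^ 2‖ ^ 2)
    {x : EuclideanSpace ℂ (Fin 2)} (hx : x ≠ 0) :
    ‖toEuclideanCLM (𝕜 := ℂ) !![a, w; w, b] x‖ < ‖x‖ := by
  set c := a * conj w + w * conj b
  have hc : ‖c‖ ^ 2 < (1 - ‖a‖ ^ 2 - ‖w‖ ^ 2) * (1 - ‖b‖ ^ 2 - ‖w‖ ^ 2) := by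
    linarith [norm_offDiag_sq_add_norm_det_sq a b w]
  have hre : (c * x 0 * conj (x 1)).re ≤ ‖c‖ * ‖x 0‖ * ‖x 1‖ :=
    (re_le_norm _).trans_eq (by simp)
  have hx' : 0 < ‖x 0‖ ^ 2 + ‖x 1‖ ^ 2 := by
    simpa [EuclideanSpace.norm_sq_eq, Fin.sum_univ_two] using pow_pos (norm_pos_iff.mpr hx) 2
  have := two_mul_mul_mul_lt_of_sq_lt h₁ hc hx'
  rw [← pow_lt_pow_iff_left₀ (norm_nonneg _) (norm_nonneg _) two_ne_zero]
  linarith [norm_sq_sub_norm_toEuclideanCLM_symmetric_apply_sq a b w x]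

theorem exists_norm_toEuclideanCLM_symmetric_apply_eq
    (hdet : 1 - ‖a‖ ^ 2 - ‖b‖ ^ 2 - 2 * ‖w‖ ^ 2 + ‖a * b - w ^ 2‖ ^ 2 = 0) :
    ∃ x : EuclideanSpace ℂ (Fin 2), x ≠ 0 ∧ ‖toEuclideanCLM (𝕜 := ℂ) !![a, w; w, b] x‖ = ‖x‖ := by
  set c := a * conj w + w * conj b with hc_def
  set m₁ := 1 - ‖a‖ ^ 2 - ‖w‖ ^ 2
  have hc : ‖c‖ ^ 2 = m₁ * (1 - ‖b‖ ^ 2 - ‖w‖ ^ 2) := by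
    linarith [norm_offDiag_sq_add_norm_det_sq a b w]
  suffices ∃ x : EuclideanSpace ℂ (Fin 2), x ≠ 0 ∧
      ‖x‖ ^ 2 - ‖toEuclideanCLM (𝕜 := ℂ) !![a, w; w, b] x‖ ^ 2 = 0 by
    obtain ⟨x, hx, hQ⟩ := this
    exact ⟨x, hx, (pow_left_inj₀ (norm_nonneg _) (norm_nonneg _) two_ne_zero).mp (by linarith)⟩
  by_cases hm : m₁ = 0
  · refine ⟨!₂[1, 0], fun h ↦ by simpa using congrArg (· 0) h, ?_⟩
    rw [norm_sq_sub_norm_toEuclideanCLM_symmetric_apply_sq]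
    simpa using hm
  · -- `(conj c, m₁)` spans the kernel of `1 - Mᴴ M`.
    refine ⟨!₂[conj c, m₁], fun h ↦ hm (by simpa using congrArg (· 1) h), ?_⟩
    have hre : (c * conj c * conj (m₁ : ℂ)).re = m₁ * ‖c‖ ^ 2 := by
      rw [mul_conj, conj_ofReal, ← ofReal_mul, ofReal_re, normSq_eq_norm_sq, mul_comm]
    rw [norm_sq_sub_norm_toEuclideanCLM_symmetric_apply_sq, ← hc_def]
    simp only [Fin.isValue, cons_val_zero, cons_val_one, cons_val_fin_one]
    rw [hre]
    simp only [RCLike.norm_conj, norm_real, Real.norm_eq_abs, sq_abs, hc]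
    ring

theorem norm_toEuclideanCLM_symmetric_le_one (h₁ : 0 ≤ 1 - ‖a‖ ^ 2 - ‖w‖ ^ 2)
    (h₂ : 0 ≤ 1 - ‖b‖ ^ 2 - ‖w‖ ^ 2)
    (hdet : 0 ≤ 1 - ‖a‖ ^ 2 - ‖b‖ ^ 2 - 2 * ‖w‖ ^ 2 + ‖a * b - w ^ 2‖ ^ 2) :
    ‖toEuclideanCLM (𝕜 := ℂ) !![a, w; w, b]‖ ≤ 1 :=
  ContinuousLinearMap.opNorm_le_bound _ zero_le_one fun x ↦
    (one_mul ‖x‖).symm ▸ norm_toEuclideanCLM_symmetric_apply_le h₁ h₂ hdet x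

theorem norm_toEuclideanCLM_symmetric_eq_one_iff (h₁ : 0 ≤ 1 - ‖a‖ ^ 2 - ‖w‖ ^ 2)
    (h₂ : 0 ≤ 1 - ‖b‖ ^ 2 - ‖w‖ ^ 2)
    (hdet : 0 ≤ 1 - ‖a‖ ^ 2 - ‖b‖ ^ 2 - 2 * ‖w‖ ^ 2 + ‖a * b - w ^ 2‖ ^ 2) :
    ‖toEuclideanCLM (𝕜 := ℂ) !![a, w; w, b]‖ = 1 ↔
      1 - ‖a‖ ^ 2 - ‖b‖ ^ 2 - 2 * ‖w‖ ^ 2 + ‖a * b - w ^ 2‖ ^ 2 = 0 := by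
  refine ⟨fun h ↦ ?_, fun h ↦ ?_⟩
  · by_contra hne
    exact h.not_lt <| ContinuousLinearMap.opNorm_lt_one_of_norm_apply_lt _ fun x hx ↦
      norm_toEuclideanCLM_symmetric_apply_lt h₁ (hdet.lt_of_ne' hne) hx
  · obtain ⟨x, hx, hMx⟩ := exists_norm_toEuclideanCLM_symmetric_apply_eq h
    refine (norm_toEuclideanCLM_symmetric_le_one h₁ h₂ hdet).antisymm ?_
    simpa [hMx, norm_ne_zero_iff.mpr hx] using
      (toEuclideanCLM (𝕜 := ℂ) !![a, w; w, b]).ratio_le_opNorm x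

end Matrix

/-- Writing `A = t (C + n₂)`, the hypotheses give `n₁ ≤ n₂ r + t` with `0 ≤ t ≤ (C - n₂) r`, and the
claim reduces to the convexity of `x ↦ x²` between `n₂ r` and `C r`. -/
theorem sq_add_mul_le_sq_mul_sq {C n₁ n₂ A B r : ℝ} (hn₁ : 0 ≤ n₁) (hn₂ : 0 ≤ n₂) (hC : n₂ < C)
    (hA : 0 ≤ A) (hB : 0 ≤ B) (h : (C ^ 2 - n₂ ^ 2) * n₁ ≤ C * A + n₂ * B)
    (hAB : A + B ≤ (C ^ 2 - n₂ ^ 2) * r) : n₁ ^ 2 + B * r ≤ C ^ 2 * r ^ 2 := by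
  have hCn : 0 < C + n₂ := by linarith
  have hD : 0 < C ^ 2 - n₂ ^ 2 := by nlinarith
  have hr : 0 ≤ r := nonneg_of_mul_nonneg_right (by linarith) hD
  have hB_le : B ≤ (C ^ 2 - n₂ ^ 2) * r - A := by linarith
  obtain ⟨t, ht0, rfl⟩ : ∃ t, 0 ≤ t ∧ A = t * (C + n₂) :=
    ⟨A / (C + n₂), div_nonneg hA hCn.le, (div_mul_cancel₀ _ hCn.ne').symm⟩
  have ht_le : t ≤ (C - n₂) * r := le_of_mul_le_mul_right (by nlinarith) hCn
  have hn₁_le : n₁ ≤ n₂ * r + t :=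
    le_of_mul_le_mul_left (by nlinarith [mul_le_mul_of_nonneg_left hB_le hn₂]) hD
  nlinarith [pow_le_pow_left₀ hn₁ hn₁_le 2, mul_le_mul_of_nonneg_left ht_le ht0,
    mul_le_mul_of_nonneg_right hB_le hr]

theorem sub_mul_norm_le_mul_norm_add_norm_mul_norm {s : ℝ} (hs : 0 ≤ s) (y₁ y₂ q : ℂ) :
    (s - ‖y₂‖ ^ 2) * ‖y₁‖ ≤ s * ‖y₁ - conj y₂ * q‖ + ‖y₂‖ * ‖y₁ * y₂ - s * q‖ := by
  have key : ((s - ‖y₂‖ ^ 2 : ℝ) : ℂ) * y₁ =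
      s * (y₁ - conj y₂ * q) - conj y₂ * (y₁ * y₂ - s * q) := by
    rw [ofReal_sub, ofReal_pow, ← mul_conj']
    ring
  calc (s - ‖y₂‖ ^ 2) * ‖y₁‖ ≤ ‖((s - ‖y₂‖ ^ 2 : ℝ) : ℂ) * y₁‖ := by
        rw [norm_mul, norm_real, Real.norm_eq_abs]
        exact mul_le_mul_of_nonneg_right (le_abs_self _) (norm_nonneg _)
    _ ≤ s * ‖y₁ - conj y₂ * q‖ + ‖y₂‖ * ‖y₁ * y₂ - s * q‖ := by
        rw [key]
        refine (norm_sub_le _ _).trans_eq ?_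
        rw [norm_mul, norm_mul, norm_real, Real.norm_eq_abs, abs_of_nonneg hs, RCLike.norm_conj]

theorem norm_sub_sq_sub_mul_norm_sub_sq (s : ℝ) (y₁ y₂ q : ℂ) :
    ‖y₁ * y₂ - s * q‖ ^ 2 - s * ‖y₁ - conj y₂ * q‖ ^ 2 =
      (s - ‖y₂‖ ^ 2) * (s * ‖q‖ ^ 2 - ‖y₁‖ ^ 2) := by
  simp only [← normSq_eq_norm_sq]
  simp only [normSq_apply, mul_re, mul_im, sub_re, sub_im, conj_re, conj_im, ofReal_re, ofReal_im]
  ring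

section Entries

/-! The `(1,1)` and `(2,2)` entries and the determinant of `1 - Zᴴ Z`. -/

variable {C : ℝ} {lam₀ y₁ y₂ q w : ℂ}

theorem norm_sq_eq_of_sq_eq_div (hw : w ^ 2 = (y₁ * y₂ - (C : ℂ) ^ 2 * q) / ((C : ℂ) ^ 2 * lam₀)) :
    ‖w‖ ^ 2 = ‖y₁ * y₂ - (C : ℂ) ^ 2 * q‖ / (C ^ 2 * ‖lam₀‖) := by
  rw [← norm_pow, hw, norm_div, norm_mul, norm_pow, norm_real, Real.norm_eq_abs, sq_abs]

theorem one_sub_norm_sq_sub_norm_sq_nonneg_fst (hC : 0 < C) (hlam : lam₀ ≠ 0) (hy₂ : ‖y₂‖ < C)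
    (hAB : C * ‖y₁ - conj y₂ * q‖ + ‖y₁ * y₂ - (C : ℂ) ^ 2 * q‖ ≤ ‖lam₀‖ * (C ^ 2 - ‖y₂‖ ^ 2))
    (hw : w ^ 2 = (y₁ * y₂ - (C : ℂ) ^ 2 * q) / ((C : ℂ) ^ 2 * lam₀)) :
    0 ≤ 1 - ‖y₁ / ((C : ℂ) * lam₀)‖ ^ 2 - ‖w‖ ^ 2 := by
  have hr : ‖lam₀‖ ≠ 0 := norm_ne_zero_iff.mpr hlam
  have hy₁ := sub_mul_norm_le_mul_norm_add_norm_mul_norm (sq_nonneg C) y₁ y₂ q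
  push_cast at hy₁
  have hA : 0 ≤ C * ‖y₁ - conj y₂ * q‖ := by positivity
  have key := sq_add_mul_le_sq_mul_sq (r := ‖lam₀‖) (norm_nonneg y₁) (norm_nonneg y₂) hy₂ hA
    (norm_nonneg (y₁ * y₂ - (C : ℂ) ^ 2 * q)) (by linarith) (by linarith)
  rw [norm_sq_eq_of_sq_eq_div hw, norm_div, norm_mul, norm_real, Real.norm_eq_abs, div_pow,
    mul_pow, sq_abs, sub_sub, sub_nonneg, div_add_div _ _ (by positivity) (by positivity),
    div_le_one (by positivity)]
  nlinarith [mul_le_mul_of_nonneg_left key (by positivity : (0 : ℝ) ≤ C ^ 2 * ‖lam₀‖)]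

theorem one_sub_norm_sq_sub_norm_sq_nonneg_snd (hC : C ≠ 0) (hlam : lam₀ ≠ 0)
    (hB : ‖y₁ * y₂ - (C : ℂ) ^ 2 * q‖ ≤ ‖lam₀‖ * (C ^ 2 - ‖y₂‖ ^ 2))
    (hw : w ^ 2 = (y₁ * y₂ - (C : ℂ) ^ 2 * q) / ((C : ℂ) ^ 2 * lam₀)) :
    0 ≤ 1 - ‖y₂ / (C : ℂ)‖ ^ 2 - ‖w‖ ^ 2 := by
  have hr : ‖lam₀‖ ≠ 0 := norm_ne_zero_iff.mpr hlam
  rw [norm_sq_eq_of_sq_eq_div hw, norm_div, norm_real, Real.norm_eq_abs, div_pow, sq_abs,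
    sub_sub, sub_nonneg, div_add_div _ _ (by positivity) (by positivity),
    div_le_one (by positivity)]
  nlinarith [mul_le_mul_of_nonneg_left hB (by positivity : (0 : ℝ) ≤ C ^ 2 * ‖lam₀‖)]

theorem mul_one_sub_norm_sq_add_norm_det_sq (hC : C ≠ 0) (hlam : lam₀ ≠ 0)
    (hw : w ^ 2 = (y₁ * y₂ - (C : ℂ) ^ 2 * q) / ((C : ℂ) ^ 2 * lam₀)) :
    (C ^ 2 - ‖y₂‖ ^ 2) * (C ^ 2 * ‖lam₀‖ ^ 2) *
        (1 - ‖y₁ / ((C : ℂ) * lam₀)‖ ^ 2 - ‖y₂ / (C : ℂ)‖ ^ 2 - 2 * ‖w‖ ^ 2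
          + ‖y₁ / ((C : ℂ) * lam₀) * (y₂ / (C : ℂ)) - w ^ 2‖ ^ 2) =
      ((C ^ 2 - ‖y₂‖ ^ 2) * ‖lam₀‖ - ‖y₁ * y₂ - (C : ℂ) ^ 2 * q‖ - C * ‖y₁ - conj y₂ * q‖) *
        ((C ^ 2 - ‖y₂‖ ^ 2) * ‖lam₀‖ - ‖y₁ * y₂ - (C : ℂ) ^ 2 * q‖ + C * ‖y₁ - conj y₂ * q‖) := by
  have hdet : y₁ / ((C : ℂ) * lam₀) * (y₂ / C) - w ^ 2 = q / lam₀ := by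
    have : (C : ℂ) ≠ 0 := ofReal_ne_zero.mpr hC
    rw [hw]
    field_simp
    ring
  have hr : ‖lam₀‖ ≠ 0 := norm_ne_zero_iff.mpr hlam
  have hid := norm_sub_sq_sub_mul_norm_sub_sq (C ^ 2) y₁ y₂ q
  push_cast at hid
  rw [hdet, norm_sq_eq_of_sq_eq_div hw, norm_div, norm_div, norm_div, norm_mul, norm_real,
    Real.norm_eq_abs, div_pow, div_pow, div_pow, mul_pow, sq_abs]
  generalize ‖y₁ - conj y₂ * q‖ = A at hid ⊢
  field_simp
  linear_combination -hid

end Entries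

theorem Z_matrix_contraction_general (lam₀ : ℂ) (hlamne : lam₀ ≠ 0)
    (C : ℝ) (hC : 0 < C) (y₁ y₂ q w : ℂ)
    (hy₂ : ‖y₂‖ < C)
    (hΦ : (C * ‖y₁ - (starRingEnd ℂ) y₂ * q‖
        + ‖y₁ * y₂ - (C : ℂ)^2 * q‖) / (C^2 - (‖y₂‖)^2)
        ≤ ‖lam₀‖)
    (hw : w^2 = (y₁ * y₂ - (C : ℂ)^2 * q) / ((C : ℂ)^2 * lam₀)) :
    ‖Matrix.toEuclideanCLM (𝕜 := ℂ)
        !![y₁ / ((C : ℂ) * lam₀), w; w, y₂ / (C : ℂ)]‖ ≤ 1 ∧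
    (‖Matrix.toEuclideanCLM (𝕜 := ℂ)
        !![y₁ / ((C : ℂ) * lam₀), w; w, y₂ / (C : ℂ)]‖ = 1 ↔
      (C * ‖y₁ - (starRingEnd ℂ) y₂ * q‖
        + ‖y₁ * y₂ - (C : ℂ)^2 * q‖) / (C^2 - (‖y₂‖)^2)
        = ‖lam₀‖) := by
  have hD : 0 < C ^ 2 - ‖y₂‖ ^ 2 := by nlinarith [norm_nonneg y₂]
  have hA : 0 ≤ C * ‖y₁ - conj y₂ * q‖ := by positivity
  have hAB := (div_le_iff₀ hD).mp hΦ
  have h₁ := one_sub_norm_sq_sub_norm_sq_nonneg_fst hC hlamne hy₂ hAB hw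
  have h₂ := one_sub_norm_sq_sub_norm_sq_nonneg_snd hC.ne' hlamne (by linarith) hw
  have hΔ_eq := mul_one_sub_norm_sq_add_norm_det_sq hC.ne' hlamne hw
  have hk : 0 < (C ^ 2 - ‖y₂‖ ^ 2) * (C ^ 2 * ‖lam₀‖ ^ 2) := by positivity
  have hΔ := nonneg_of_mul_nonneg_right
    ((mul_nonneg (by linarith) (by linarith)).trans hΔ_eq.ge) hk
  refine ⟨norm_toEuclideanCLM_symmetric_le_one h₁ h₂ hΔ,
    (norm_toEuclideanCLM_symmetric_eq_one_iff h₁ h₂ hΔ).trans ?_⟩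
  rw [div_eq_iff hD.ne', ← mul_right_inj' hk.ne', mul_zero, hΔ_eq, mul_eq_zero]
  constructor
  · rintro (h | h) <;> linarith
  · exact fun h ↦ Or.inl (by linarith)

/-- The matrix `Z = [[y₁/(Clam₀), w], [w, y₂/C]]` is a contraction, with norm exactly `1`
iff `‖Φ‖ = |lam₀|`. -/
theorem Z_matrix_contraction (lam₀ : ℂ) (hlam : ‖lam₀‖ < 1) (hlamne : lam₀ ≠ 0)
    (C : ℝ) (hC : 0 < C) (y₁ y₂ q w : ℂ)
    (hne : y₁ * y₂ ≠ (C : ℂ)^2 * q)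
    (hle : ‖y₂‖ ≤ ‖y₁‖)
    (hy₂ : ‖y₂‖ < C)
    (hΦ : (C * ‖y₁ - (starRingEnd ℂ) y₂ * q‖
        + ‖y₁ * y₂ - (C : ℂ)^2 * q‖) / (C^2 - (‖y₂‖)^2)
        ≤ ‖lam₀‖)
    (hw : w^2 = (y₁ * y₂ - (C : ℂ)^2 * q) / ((C : ℂ)^2 * lam₀)) :
    ‖Matrix.toEuclideanCLM (𝕜 := ℂ)
        !![y₁ / ((C : ℂ) * lam₀), w; w, y₂ / (C : ℂ)]‖ ≤ 1 ∧
    (‖Matrix.toEuclideanCLM (𝕜 := ℂ)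
        !![y₁ / ((C : ℂ) * lam₀), w; w, y₂ / (C : ℂ)]‖ = 1 ↔
      (C * ‖y₁ - (starRingEnd ℂ) y₂ * q‖
        + ‖y₁ * y₂ - (C : ℂ)^2 * q‖) / (C^2 - (‖y₂‖)^2)
        = ‖lam₀‖) :=
  Z_matrix_contraction_general lam₀ hlamne C hC y₁ y₂ q w hy₂ hΦ hw
end

section
/- Schwarz lemma for Gₙ via the Costara function: let λ₀ ∈ 𝔻 \ {0} and (s₁⁰,…,s_{n−1}⁰,p⁰) ∈ Gₙ. If there is an analytic function ψ : 𝔻 → Gₙ with ψ(0) = (0,…,0) and ψ(λ₀) = (s₁⁰,…,s_{n−1}⁰,p⁰), then sup over z in the closed unit disc of |(n(−1)ⁿp⁰z^{n−1} + (n−1)(−1)^{n−1}s_{n−1}⁰z^{n−2} + ⋯ − s₁⁰)/(n − (n−1)s₁⁰z + ⋯ + (−1)^{n−1}s_{n−1}⁰z^{n−1})| ≤ |λ₀|. -/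
/-- The `k`-th elementary symmetric polynomial of `z : Fin n → ℂ`. -/
noncomputable def esymmFin (n : ℕ) (z : Fin n → ℂ) (k : ℕ) : ℂ :=
  ∑ t ∈ Finset.powersetCard k (Finset.univ : Finset (Fin n)), ∏ i ∈ t, z i

/-- Membership in `G_{n,r} = πₙ(𝔻_r × ⋯ × 𝔻_r)`. -/
def inSymmPolydisc (n : ℕ) (r : ℝ) (s : Fin n → ℂ) : Prop :=
  ∃ z : Fin n → ℂ, (∀ i, ‖z i‖ < r) ∧
    ∀ k : Fin n, s k = esymmFin n z (k.val + 1)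


/-!
For `s = πₙ(w)` put `P(X) = ∏ᵢ (1 - wᵢ X)`. The numerator of `f_s` is `P'` and its denominator is
`nP - XP' = ∑ᵢ ∏_{j ≠ i} (1 - wⱼ X)`. Dividing by `P(z)`, the inequality `|f_s(z)| < 1` becomes
`|∑ᵢ vᵢ| < |n + z ∑ᵢ vᵢ|` with `vᵢ = wᵢ / (1 - wᵢ z)`; it holds because each `vᵢ` lies in
`{v | |v| < |1 + z v|}`, which is convex for `|z| ≤ 1`, and so contains the mean of the `vᵢ`.
Hence `λ ↦ f_{ψ(λ)}(z)` maps `𝔻` to `𝔻` and vanishes at `0`, and the classical Schwarz lemma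
applies.
-/

open Finset Polynomial

theorem Finset.prod_one_sub_mul_eq_sum_powersetCard {ι R : Type*} [CommRing R] (s : Finset ι)
    (w : ι → R) (x : R) :
    ∏ i ∈ s, (1 - w i * x) =
      ∑ j ∈ range (s.card + 1), (-1) ^ j * (∑ t ∈ powersetCard j s, ∏ i ∈ t, w i) * x ^ j := by
  simp_rw [sub_eq_add_neg, prod_one_add, sum_powerset, mul_sum, sum_mul]
  refine sum_congr rfl fun j _ => sum_congr rfl fun t ht => ?_
  rw [← (mem_powersetCard.1 ht).2, ← prod_const, ← prod_const, ← prod_mul_distrib,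
    ← prod_mul_distrib]
  exact prod_congr rfl fun i _ => by ring

/-- The symmetrization map `πₙ`. -/
noncomputable def symmetrize (n : ℕ) (w : Fin n → ℂ) : Fin n → ℂ :=
  fun k => esymmFin n w (k.val + 1)

/-- `s k` stands for the paper's `s_{k+1}` (so `p = s (n - 1)`), and
`f_s = costaraNum / costaraDen`. -/
noncomputable def costaraNum (n : ℕ) (s : Fin n → ℂ) (z : ℂ) : ℂ :=
  ∑ k : Fin n, (-1 : ℂ) ^ (k.val + 1) * ((k.val + 1 : ℕ) : ℂ) * s k * z ^ k.val

noncomputable def costaraDen (n : ℕ) (s : Fin n → ℂ) (z : ℂ) : ℂ :=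
  (n : ℂ) + ∑ k : Fin n,
    if k.val + 1 ≤ n - 1 then
      (-1 : ℂ) ^ (k.val + 1) * ((n : ℂ) - ((k.val + 1 : ℕ) : ℂ)) * s k * z ^ (k.val + 1)
    else 0

theorem costaraDen_add_mul_costaraNum (n : ℕ) (s : Fin n → ℂ) (z : ℂ) :
    costaraDen n s z + z * costaraNum n s z =
      n * (1 + ∑ k : Fin n, (-1 : ℂ) ^ (k.val + 1) * s k * z ^ (k.val + 1)) := by
  rw [costaraDen, costaraNum, mul_add, mul_one, add_assoc, mul_sum, mul_sum, ← sum_add_distrib]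
  congr 1
  refine sum_congr rfl fun k _ => ?_
  split_ifs with hk
  · push_cast; ring
  · have hn : (n : ℂ) = k.val + 1 := by exact_mod_cast (show n = k.val + 1 by omega)
    rw [hn]; push_cast; ring

theorem prod_one_sub_C_mul_X_eq_sum_esymmFin (n : ℕ) (w : Fin n → ℂ) :
    ∏ i, (1 - C (w i) * X) = ∑ j ∈ range (n + 1), C ((-1) ^ j * esymmFin n w j) * X ^ j := by
  rw [prod_one_sub_mul_eq_sum_powersetCard, card_univ, Fintype.card_fin]
  simp [esymmFin, map_sum, map_prod]

theorem costaraNum_symmetrize_eq_eval_derivative (n : ℕ) (w : Fin n → ℂ) (z : ℂ) :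
    costaraNum n (symmetrize n w) z = (derivative (∏ i, (1 - C (w i) * X))).eval z := by
  rw [prod_one_sub_C_mul_X_eq_sum_esymmFin, derivative_sum, eval_finsetSum, sum_range_succ',
    ← Fin.sum_univ_eq_sum_range]
  simp only [derivative_C_mul_X_pow, eval_C_mul, eval_pow, eval_X, Nat.cast_zero, mul_zero,
    zero_mul, add_zero, add_tsub_cancel_right, costaraNum, symmetrize]
  exact sum_congr rfl fun k _ => by ring

theorem one_add_sum_symmetrize (n : ℕ) (w : Fin n → ℂ) (z : ℂ) :
    1 + ∑ k : Fin n, (-1 : ℂ) ^ (k.val + 1) * symmetrize n w k * z ^ (k.val + 1) =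
      ∏ i, (1 - w i * z) := by
  rw [prod_one_sub_mul_eq_sum_powersetCard, card_univ, Fintype.card_fin, sum_range_succ',
    ← Fin.sum_univ_eq_sum_range (fun k => (-1 : ℂ) ^ (k + 1) * _ * z ^ (k + 1)), add_comm]
  simp [symmetrize, esymmFin]

theorem costaraNum_symmetrize_eq_sum (n : ℕ) (w : Fin n → ℂ) (z : ℂ) :
    costaraNum n (symmetrize n w) z = -∑ i, w i * ∏ j ∈ univ.erase i, (1 - w j * z) := by
  classical
  rw [costaraNum_symmetrize_eq_eval_derivative, derivative_prod_finset, eval_finsetSum,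
    ← sum_neg_distrib]
  refine sum_congr rfl fun i _ => ?_
  simp only [derivative_sub, derivative_one, derivative_mul, derivative_C, derivative_X, zero_mul,
    mul_one, zero_add, zero_sub, mul_neg, eval_neg, eval_mul, eval_prod, eval_sub, eval_one, eval_C,
    eval_X, neg_inj]
  ring

theorem costaraDen_symmetrize_eq_sum (n : ℕ) (w : Fin n → ℂ) (z : ℂ) :
    costaraDen n (symmetrize n w) z = ∑ i, ∏ j ∈ univ.erase i, (1 - w j * z) := by
  have hP : (n : ℂ) * ∏ i, (1 - w i * z) =
      ∑ i, (1 - w i * z) * ∏ j ∈ univ.erase i, (1 - w j * z) := by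
    rw [sum_congr rfl fun i _ => mul_prod_erase univ (fun j => 1 - w j * z) (mem_univ i),
      sum_const, card_univ, Fintype.card_fin, nsmul_eq_mul]
  have h := costaraDen_add_mul_costaraNum n (symmetrize n w) z
  rw [one_add_sum_symmetrize, costaraNum_symmetrize_eq_sum, hP] at h
  rw [eq_sub_of_add_eq h, mul_neg, sub_neg_eq_add, mul_sum, ← sum_add_distrib]
  exact sum_congr rfl fun i _ => by ring

theorem convex_setOf_norm_lt_norm_one_add_mul {z : ℂ} (hz : ‖z‖ ≤ 1) :
    Convex ℝ {v : ℂ | ‖v‖ < ‖1 + z * v‖} := by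
  intro a ha b hb θ η hθ hη hθη
  simp only [Set.mem_ofPred_eq, ← sq_lt_sq₀ (norm_nonneg _) (norm_nonneg _)] at ha hb ⊢
  have hconcave : ‖1 + z * (θ • a + η • b)‖ ^ 2 - ‖θ • a + η • b‖ ^ 2 =
      θ * (‖1 + z * a‖ ^ 2 - ‖a‖ ^ 2) + η * (‖1 + z * b‖ ^ 2 - ‖b‖ ^ 2) +
        θ * η * (1 - ‖z‖ ^ 2) * ‖a - b‖ ^ 2 := by
    obtain rfl : η = 1 - θ := by linarith
    simp only [Complex.sq_norm, Complex.normSq_apply, Complex.add_re, Complex.add_im,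
      Complex.mul_re, Complex.mul_im, Complex.sub_re, Complex.sub_im, Complex.real_smul,
      Complex.ofReal_re, Complex.ofReal_im, Complex.one_re, Complex.one_im]
    ring
  have hz2 : ‖z‖ ^ 2 ≤ 1 := pow_le_one₀ (norm_nonneg z) hz
  have hdefect : 0 ≤ θ * η * (1 - ‖z‖ ^ 2) * ‖a - b‖ ^ 2 := by
    have := mul_nonneg hθ hη
    positivity
  have hpos : 0 < θ * (‖1 + z * a‖ ^ 2 - ‖a‖ ^ 2) + η * (‖1 + z * b‖ ^ 2 - ‖b‖ ^ 2) := by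
    rcases hθ.eq_or_lt with rfl | hθ
    · rw [zero_add] at hθη
      rw [hθη]
      linarith
    · nlinarith [mul_pos hθ (sub_pos.2 ha), mul_nonneg hη (sub_pos.2 hb).le]
  linarith

theorem one_sub_mul_ne_zero_of_norm_lt_one {w z : ℂ} (hw : ‖w‖ < 1) (hz : ‖z‖ ≤ 1) :
    1 - w * z ≠ 0 := by
  refine sub_ne_zero.2 fun h => ?_
  have : ‖w * z‖ < 1 := by
    rw [norm_mul]; exact mul_lt_one_of_nonneg_of_lt_one_left (norm_nonneg w) hw hz
  rw [← h, norm_one] at this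
  exact lt_irrefl _ this

theorem norm_sum_div_lt_norm_sum_inv {ι : Type*} [Fintype ι] [Nonempty ι] {w : ι → ℂ}
    (hw : ∀ i, ‖w i‖ < 1) {z : ℂ} (hz : ‖z‖ ≤ 1) :
    ‖∑ i, w i / (1 - w i * z)‖ < ‖∑ i, (1 - w i * z)⁻¹‖ := by
  have hne : ∀ i, 1 - w i * z ≠ 0 := fun i => one_sub_mul_ne_zero_of_norm_lt_one (hw i) hz
  have hinv : ∀ i, 1 + z * (w i / (1 - w i * z)) = (1 - w i * z)⁻¹ := fun i => by
    rw [mul_div_assoc', one_add_div (hne i), ← one_div]; ring_nf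
  have hmem : ∀ i, w i / (1 - w i * z) ∈ {v : ℂ | ‖v‖ < ‖1 + z * v‖} := by
    intro i
    rw [Set.mem_ofPred_eq, hinv, div_eq_mul_inv, norm_mul]
    exact mul_lt_of_lt_one_left (norm_pos_iff.2 (inv_ne_zero (hne i))) (hw i)
  set V := ∑ i, w i / (1 - w i * z)
  set N : ℝ := (Fintype.card ι : ℝ)
  have hN : 0 < N := Nat.cast_pos.2 Fintype.card_pos
  have hmean := (convex_setOf_norm_lt_norm_one_add_mul hz).sum_mem (t := univ)
    (w := fun _ => N⁻¹) (fun _ _ => (inv_pos.2 hN).le) (by simp [N, hN.ne']) fun i _ => hmem i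
  rw [← smul_sum, Set.mem_ofPred_eq, Complex.real_smul] at hmean
  have hsum : ∑ i, (1 - w i * z)⁻¹ = N * (1 + z * ((N⁻¹ : ℝ) * V)) := by
    rw [← sum_congr rfl fun i _ => hinv i, sum_add_distrib, sum_const, ← mul_sum, card_univ,
      nsmul_one, mul_add, mul_one, mul_left_comm, Complex.ofReal_inv,
      mul_inv_cancel_left₀ (Complex.ofReal_ne_zero.2 hN.ne'), Complex.ofReal_natCast]
  rw [hsum, norm_mul, Complex.norm_real, Real.norm_of_nonneg hN.le]
  calc ‖V‖ = N * ‖((N⁻¹ : ℝ) : ℂ) * V‖ := by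
        rw [norm_mul, Complex.norm_real, Real.norm_of_nonneg (inv_pos.2 hN).le,
          mul_inv_cancel_left₀ hN.ne']
    _ < N * ‖1 + z * ((N⁻¹ : ℝ) * V)‖ := mul_lt_mul_of_pos_left hmean hN

theorem norm_costaraNum_lt_norm_costaraDen {n : ℕ} (hn : n ≠ 0) {w : Fin n → ℂ}
    (hw : ∀ i, ‖w i‖ < 1) {z : ℂ} (hz : ‖z‖ ≤ 1) :
    ‖costaraNum n (symmetrize n w) z‖ < ‖costaraDen n (symmetrize n w) z‖ := by
  have : Nonempty (Fin n) := ⟨⟨0, Nat.pos_of_ne_zero hn⟩⟩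
  have hne : ∀ i, 1 - w i * z ≠ 0 := fun i => one_sub_mul_ne_zero_of_norm_lt_one (hw i) hz
  set P := ∏ i, (1 - w i * z)
  have hP : 0 < ‖P‖ := norm_pos_iff.2 (prod_ne_zero_iff.2 fun i _ => hne i)
  have herase : ∀ i, ∏ j ∈ univ.erase i, (1 - w j * z) = P * (1 - w i * z)⁻¹ := fun i => by
    rw [eq_mul_inv_iff_mul_eq₀ (hne i), prod_erase_mul _ _ (mem_univ i)]
  have hnum : ∑ i, w i * ∏ j ∈ univ.erase i, (1 - w j * z) = P * ∑ i, w i / (1 - w i * z) := by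
    simp_rw [herase, mul_sum, div_eq_mul_inv, mul_left_comm]
  have hden : ∑ i, ∏ j ∈ univ.erase i, (1 - w j * z) = P * ∑ i, (1 - w i * z)⁻¹ := by
    simp_rw [herase, mul_sum]
  rw [costaraNum_symmetrize_eq_sum, costaraDen_symmetrize_eq_sum, norm_neg, hnum, hden, norm_mul,
    norm_mul]
  exact mul_lt_mul_of_pos_left (norm_sum_div_lt_norm_sum_inv hw hz) hP

theorem norm_costaraNum_lt_norm_costaraDen_of_inSymmPolydisc {n : ℕ} (hn : n ≠ 0)
    {s : Fin n → ℂ} (hs : inSymmPolydisc n 1 s) {z : ℂ} (hz : ‖z‖ ≤ 1) :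
    ‖costaraNum n s z‖ < ‖costaraDen n s z‖ := by
  obtain ⟨w, hw, hsw⟩ := hs
  rw [show s = symmetrize n w from funext hsw]
  exact norm_costaraNum_lt_norm_costaraDen hn hw hz

theorem differentiable_costaraNum (n : ℕ) (z : ℂ) :
    Differentiable ℂ fun s : Fin n → ℂ => costaraNum n s z := by
  unfold costaraNum; fun_prop

theorem differentiable_costaraDen (n : ℕ) (z : ℂ) :
    Differentiable ℂ fun s : Fin n → ℂ => costaraDen n s z := by
  unfold costaraDen
  refine (differentiable_const _).add (Differentiable.fun_sum fun k _ => ?_)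
  split_ifs <;> fun_prop

theorem schwarz_lemma_costara_general (n : ℕ) (hn : 2 ≤ n) (ψ : ℂ → (Fin n → ℂ))
    (hψ : DifferentiableOn ℂ ψ (Metric.ball (0 : ℂ) 1))
    (hmap : ∀ lam ∈ Metric.ball (0 : ℂ) 1, inSymmPolydisc n 1 (ψ lam))
    (hzero : ψ 0 = 0)
    (lam₀ : ℂ) (hlam₀ : lam₀ ∈ Metric.ball (0 : ℂ) 1)
    (s : Fin n → ℂ) (hval : ψ lam₀ = s) :
    ∀ z : ℂ, ‖z‖ ≤ 1 →
      ‖(∑ k : Fin n,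
          (-1 : ℂ)^(k.val + 1) * ((k.val + 1 : ℕ) : ℂ) * s k * z^(k.val)) /
        ((n : ℂ) + ∑ k : Fin n,
          if k.val + 1 ≤ n - 1 then
            (-1 : ℂ)^(k.val + 1) * ((n : ℂ) - ((k.val + 1 : ℕ) : ℂ)) * s k * z^(k.val + 1)
          else 0)‖ ≤ ‖lam₀‖ := by
  intro z hz
  change ‖costaraNum n s z / costaraDen n s z‖ ≤ ‖lam₀‖
  have hlt : ∀ lam ∈ Metric.ball (0 : ℂ) 1, ‖costaraNum n (ψ lam) z‖ < ‖costaraDen n (ψ lam) z‖ :=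
    fun lam hlam =>
      norm_costaraNum_lt_norm_costaraDen_of_inSymmPolydisc (by omega) (hmap lam hlam) hz
  set F := fun lam => costaraNum n (ψ lam) z / costaraDen n (ψ lam) z
  have hF : DifferentiableOn ℂ F (Metric.ball 0 1) :=
    ((differentiable_costaraNum n z).comp_differentiableOn hψ).div
      ((differentiable_costaraDen n z).comp_differentiableOn hψ)
      fun lam hlam => norm_pos_iff.1 ((norm_nonneg _).trans_lt (hlt lam hlam))
  have hmaps : Set.MapsTo F (Metric.ball 0 1) (Metric.closedBall 0 1) := fun lam hlam => by
    rw [mem_closedBall_zero_iff, norm_div]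
    exact div_le_one_of_le₀ (hlt lam hlam).le (norm_nonneg _)
  have hF0 : F 0 = 0 := by simp [F, hzero, costaraNum]
  simpa [F, hval] using Complex.norm_le_norm_of_mapsTo_ball hF hmaps hF0
    (mem_ball_zero_iff.1 hlam₀)

/-- Schwarz lemma for `Gₙ` via the Costara function: here `s : Fin n → ℂ` encodes
`(s₁,…,s_{n−1},p)` with `p = s (n-1)`. -/
theorem schwarz_lemma_costara (n : ℕ) (hn : 2 ≤ n) (ψ : ℂ → (Fin n → ℂ))
    (hψ : DifferentiableOn ℂ ψ (Metric.ball (0 : ℂ) 1))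
    (hmap : ∀ lam ∈ Metric.ball (0 : ℂ) 1, inSymmPolydisc n 1 (ψ lam))
    (hzero : ψ 0 = 0)
    (lam₀ : ℂ) (hlam₀ : lam₀ ∈ Metric.ball (0 : ℂ) 1) (hlam₀' : lam₀ ≠ 0)
    (s : Fin n → ℂ) (hval : ψ lam₀ = s) :
    ∀ z : ℂ, ‖z‖ ≤ 1 →
      ‖(∑ k : Fin n,
          (-1 : ℂ)^(k.val + 1) * ((k.val + 1 : ℕ) : ℂ) * s k * z^(k.val)) /
        ((n : ℂ) + ∑ k : Fin n,
          if k.val + 1 ≤ n - 1 then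
            (-1 : ℂ)^(k.val + 1) * ((n : ℂ) - ((k.val + 1 : ℕ) : ℂ)) * s k * z^(k.val + 1)
          else 0)‖ ≤ ‖lam₀‖ :=
  schwarz_lemma_costara_general n hn ψ hψ hmap hzero lam₀ hlam₀ s hval
end
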